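/- arXiv:1811.06777 — 3 statements merged into one kernel-verified Lean document; each statement's English description precedes it below -/
import Mathlib

section
/- Every reticulation edge in a binary tree-child phylogenetic network is valid: deleting the edge and then repeatedly (1) deleting unlabelled outdegree-0 nodes, (2) suppressing indegree-1 outdegree-1 nodes, and (3) replacing parallel edges by a single edge, results in a network with exactly 2 fewer nodes and 3 fewer edges than the original network. -/
open scoped Classical
noncomputable section

/-- A (rooted binary phylogenetic) network datum: a finite directed graph on `ℕ`
with an optional leaf-labelling by `α`. -/
structure Net (α : Type) where
  verts : Finset ℕ
  edges : Finset (ℕ × ℕ)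
  lab : ℕ → Option α

namespace Net

variable {α β : Type}

def Edge (N : Net α) (u v : ℕ) : Prop := (u, v) ∈ N.edges

def indeg (N : Net α) (v : ℕ) : ℕ := (N.edges.filter fun e => e.2 = v).card
def outdeg (N : Net α) (v : ℕ) : ℕ := (N.edges.filter fun e => e.1 = v).card

/-- Reachability by directed paths. -/
def Reaches (N : Net α) : ℕ → ℕ → Prop := Relation.ReflTransGen N.Edge

def IsRoot (N : Net α) (v : ℕ) : Prop :=
  v ∈ N.verts ∧ N.indeg v = 0 ∧ N.outdeg v = 1
def IsLeaf (N : Net α) (v : ℕ) : Prop :=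
  v ∈ N.verts ∧ N.indeg v = 1 ∧ N.outdeg v = 0
def IsTreeNode (N : Net α) (v : ℕ) : Prop :=
  v ∈ N.verts ∧ N.indeg v = 1 ∧ N.outdeg v = 2
def IsRetic (N : Net α) (v : ℕ) : Prop :=
  v ∈ N.verts ∧ N.indeg v = 2 ∧ N.outdeg v = 1

/-- `N` is a rooted binary phylogenetic network on leaf set `α`. -/
def IsNetwork (N : Net α) : Prop :=
  (∀ e ∈ N.edges, e.1 ∈ N.verts ∧ e.2 ∈ N.verts) ∧
  (∀ u v, N.Edge u v → ¬ N.Reaches v u) ∧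
  (∃! r, N.IsRoot r) ∧
  (∀ v ∈ N.verts, N.IsRoot v ∨ N.IsLeaf v ∨ N.IsTreeNode v ∨ N.IsRetic v) ∧
  (∀ v, (∃ x, N.lab v = some x) ↔ N.IsLeaf v) ∧
  (∀ x : α, ∃! v, N.lab v = some x)

/-- Tree-child: every non-leaf node has a child that is a tree node or a leaf. -/
def TreeChild (N : Net α) : Prop :=
  N.IsNetwork ∧
  ∀ v ∈ N.verts, ¬ N.IsLeaf v → ∃ c, N.Edge v c ∧ (N.IsTreeNode c ∨ N.IsLeaf c)

def IsReticEdge (N : Net α) (e : ℕ × ℕ) : Prop := e ∈ N.edges ∧ N.IsRetic e.2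

def deleteNode (N : Net α) (v : ℕ) : Net α :=
  ⟨N.verts.erase v, N.edges.filter fun e => e.1 ≠ v ∧ e.2 ≠ v, N.lab⟩

def deleteEdge (N : Net α) (e : ℕ × ℕ) : Net α := ⟨N.verts, N.edges.erase e, N.lab⟩

def deleteEdges (N : Net α) (E : Finset (ℕ × ℕ)) : Net α := ⟨N.verts, N.edges \ E, N.lab⟩

/-- One step of cleaning up: delete an unlabelled outdegree-0 node, or suppress an
indegree-1 outdegree-1 node.  (In this simple-digraph encoding the parallel-edge rule
is subsumed: the inserted edge merges with an existing one, and the endpoints are then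
suppressed by further steps.) -/
inductive CleanStep {α : Type} : Net α → Net α → Prop
  | delNode (N : Net α) (v : ℕ) (hv : v ∈ N.verts) (h0 : N.outdeg v = 0)
      (hlab : N.lab v = none) : CleanStep N (N.deleteNode v)
  | suppress (N : Net α) (u v w : ℕ) (h1 : N.indeg v = 1) (h2 : N.outdeg v = 1)
      (hu : N.Edge u v) (hw : N.Edge v w) :
      CleanStep N ⟨N.verts.erase v,
        insert (u, w) (N.edges.filter fun e => e.1 ≠ v ∧ e.2 ≠ v), N.lab⟩

/-- `N` cleans up to `M`: apply clean-up steps until none applies. -/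
def CleansTo (N M : Net α) : Prop :=
  Relation.ReflTransGen CleanStep N M ∧ ∀ M', ¬ CleanStep M M'

/-- Maximum subnetwork: delete one reticulation edge and clean up. -/
def IsMaxSubnet (N M : Net α) : Prop :=
  ∃ e, N.IsReticEdge e ∧ CleansTo (N.deleteEdge e) M

/-- A reticulation edge is valid if deleting it and cleaning up removes exactly
2 nodes and 3 edges. -/
def ValidEdge (N : Net α) (e : ℕ × ℕ) : Prop :=
  N.IsReticEdge e ∧
  ∀ M, CleansTo (N.deleteEdge e) M →
    M.verts.card + 2 = N.verts.card ∧ M.edges.card + 3 = N.edges.card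

/-- A valid network: all reticulation edges are valid. -/
def Valid (N : Net α) : Prop :=
  N.IsNetwork ∧ ∀ e, N.IsReticEdge e → N.ValidEdge e

def Subgraph (M N : Net α) : Prop :=
  M.verts ⊆ N.verts ∧ M.edges ⊆ N.edges ∧ ∀ v ∈ M.verts, M.lab v = N.lab v

/-- One edge-subdivision step. -/
inductive SubdivStep {α : Type} : Net α → Net α → Prop
  | mk (N : Net α) (u v w : ℕ) (he : N.Edge u v) (hw : w ∉ N.verts) :
      SubdivStep N ⟨insert w N.verts,
        insert (u, w) (insert (w, v) (N.edges.erase (u, v))), N.lab⟩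

/-- `M` is a subdivision of `N`. -/
def Subdivision (N M : Net α) : Prop := Relation.ReflTransGen SubdivStep N M

/-- Isomorphism of networks (preserving leaf labels). -/
def Iso (N M : Net α) : Prop :=
  ∃ f : ℕ → ℕ, Set.BijOn f ↑N.verts ↑M.verts ∧
    (∀ u ∈ N.verts, ∀ v ∈ N.verts, (N.Edge u v ↔ M.Edge (f u) (f v))) ∧
    ∀ v ∈ N.verts, N.lab v = M.lab (f v)

/-- `N` displays `M`: some subgraph of `N` is (isomorphic to) a subdivision of `M`. -/
def Displays (N M : Net α) : Prop :=
  ∃ S M', Subgraph S N ∧ Subdivision M M' ∧ Iso M' S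

/-- Leaf-descendant (label) set of a node. -/
def descSet (N : Net α) (v : ℕ) : Set α :=
  {x | ∃ l, N.lab l = some x ∧ N.Reaches v l}

def Adj (N : Net α) (u v : ℕ) : Prop := N.Edge u v ∨ N.Edge v u

def ConnectedIn (N : Net α) (S : Finset ℕ) (u v : ℕ) : Prop :=
  Relation.ReflTransGen (fun a b => a ∈ S ∧ b ∈ S ∧ N.Adj a b) u v

/-- A biconnected vertex set: at least 3 nodes, connected, and no cut-node. -/
def BiconnectedSet (N : Net α) (S : Finset ℕ) : Prop :=
  3 ≤ S.card ∧ S ⊆ N.verts ∧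
  (∀ u ∈ S, ∀ v ∈ S, N.ConnectedIn S u v) ∧
  ∀ c ∈ S, ∀ u ∈ S.erase c, ∀ v ∈ S.erase c, N.ConnectedIn (S.erase c) u v

/-- A biconnected component: a maximal biconnected set. -/
def BlobSet (N : Net α) (S : Finset ℕ) : Prop :=
  N.BiconnectedSet S ∧ ∀ T, N.BiconnectedSet T → S ⊆ T → S = T

/-- A blob: either a biconnected component, or a tree node in no biconnected component. -/
def IsBlob (N : Net α) (S : Finset ℕ) : Prop :=
  N.BlobSet S ∨ ∃ t, S = {t} ∧ N.IsTreeNode t ∧ ∀ T, N.BlobSet T → t ∉ T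

/-- The top node of a blob: the node of the blob from which all its nodes are reachable. -/
def TopNode (N : Net α) (S : Finset ℕ) (v : ℕ) : Prop :=
  v ∈ S ∧ ∀ u ∈ S, N.Reaches v u

/-- The blob tree of `N` contains a blob node labelled `A`. -/
def HasBlobNode (N : Net α) (A : Set α) : Prop :=
  ∃ S v, N.IsBlob S ∧ N.TopNode S v ∧ N.descSet v = A

/-- The blob tree of `N` has an edge from blob node `A` to blob node `B`. -/
def BTEdge (N : Net α) (A B : Set α) : Prop :=
  ∃ S T u v, N.IsBlob S ∧ N.IsBlob T ∧ S ≠ T ∧ N.TopNode S u ∧ N.TopNode T v ∧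
    N.descSet u = A ∧ N.descSet v = B ∧ ∃ w ∈ S, N.Edge w v

def reticCount (N : Net α) (S : Finset ℕ) : ℕ := (S.filter fun v => N.IsRetic v).card

/-- `N` is a level-`k` network. -/
def IsLevel (N : Net α) (k : ℕ) : Prop :=
  (∀ S, N.BiconnectedSet S → N.reticCount S ≤ k) ∧
  (k = 0 ∨ ∃ S, N.BiconnectedSet S ∧ N.reticCount S = k)

/-- `M` is a maximum lower-level subnetwork (MLLS) of the level-`k` network `N`:
obtained by deleting exactly one valid reticulation edge from every level-`k`
biconnected component and cleaning up. -/
def IsMLLS (N : Net α) (k : ℕ) (M : Net α) : Prop :=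
  ∃ E : Finset (ℕ × ℕ),
    (∀ e ∈ E, N.ValidEdge e) ∧
    (∀ S, N.BlobSet S → N.reticCount S = k → ∃! e, e ∈ E ∧ e.1 ∈ S ∧ e.2 ∈ S) ∧
    (∀ e ∈ E, ∃ S, N.BlobSet S ∧ N.reticCount S = k ∧ e.1 ∈ S ∧ e.2 ∈ S) ∧
    CleansTo (N.deleteEdges E) M

/-- A cherry on two leaves. -/
def Cherry (N : Net α) (x y : ℕ) : Prop :=
  N.IsLeaf x ∧ N.IsLeaf y ∧ x ≠ y ∧ ∃ p, N.Edge p x ∧ N.Edge p y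

/-- A reticulated cherry on two leaves, with the reticulation on `y`. -/
def RetCherry (N : Net α) (x y : ℕ) : Prop :=
  N.IsLeaf x ∧ N.IsLeaf y ∧
  ∃ p r, N.IsRetic r ∧ N.Edge r y ∧ N.Edge p x ∧ N.Edge p r

/-- A reticulated cherry shape on non-reticulation nodes `x, y` with nodes
`px, py, gy` and edges `(px,x), (px,py), (gy,py), (py,y)`, `py` a reticulation. -/
def RetCherryShape (N : Net α) (x y px py gy : ℕ) : Prop :=
  ¬ N.IsRetic x ∧ ¬ N.IsRetic y ∧ N.IsRetic py ∧ px ≠ gy ∧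
  N.Edge px x ∧ N.Edge px py ∧ N.Edge gy py ∧ N.Edge py y

def DirPath (N : Net α) (l : List ℕ) : Prop := l ≠ [] ∧ l.Chain' N.Edge

/-- `l` is the node sequence of an up-down path from `x` to `y`: a directed path from
an apex down to `x`, reversed, followed by a directed path from the apex down to `y`. -/
def IsUpDownPath (N : Net α) (x y : ℕ) (l : List ℕ) : Prop :=
  ∃ p q : List ℕ, N.DirPath p ∧ N.DirPath q ∧ p.head? = q.head? ∧
    p.getLast? = some x ∧ q.getLast? = some y ∧ l = p.reverse ++ q.tail

/-- `n` is the shortest up-down distance between `x` and `y` (an up-down path with `n`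
edges has `n+1` nodes). -/
def IsUpDownDist (N : Net α) (x y n : ℕ) : Prop :=
  (∃ l, N.IsUpDownPath x y l ∧ l.length = n + 1) ∧
  ∀ l, N.IsUpDownPath x y l → n + 1 ≤ l.length

def relabel (N : Net α) (f : α → β) : Net β :=
  ⟨N.verts, N.edges, fun v => (N.lab v).map f⟩

/-- Collapse the pendant subnetwork rooted at `y` to a single leaf labelled `A`. -/
def collapseAt (N : Net α) (y : ℕ) (A : α) : Net α :=
  ⟨N.verts.filter (fun v => v = y ∨ ¬ N.Reaches y v),
   N.edges.filter (fun e => ¬ N.Reaches y e.1),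
   fun v => if v = y then some A else N.lab v⟩

/-- Leaf-descendant set for networks whose leaves are labelled by sets of taxa. -/
def descUnion (N : Net (Set α)) (v : ℕ) : Set α :=
  {x | ∃ l s, N.lab l = some s ∧ x ∈ s ∧ N.Reaches v l}

def HasBlobNodeU (N : Net (Set α)) (A : Set α) : Prop :=
  ∃ S v, N.IsBlob S ∧ N.TopNode S v ∧ N.descUnion v = A

/-- `M` is a subnetwork of `N`: displayed by `N` and not `N` itself. -/
def Subnet (N M : Net α) : Prop := M.IsNetwork ∧ N.Displays M ∧ ¬ N.Iso M

/-- Equality of sets of networks up to isomorphism. -/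
def SetEquiv (S T : Set (Net α)) : Prop :=
  ∀ M, (∃ M₁ ∈ S, Iso M M₁) ↔ ∃ M₂ ∈ T, Iso M M₂

/-- The subnetworks of `N` of level at most `k - 1`. -/
def lowerSubnets (N : Net α) (k : ℕ) : Set (Net α) :=
  {M | N.Subnet M ∧ ∃ j < k, M.IsLevel j}

/-- The set of all MLLSs of `N`. -/
def mllsSet (N : Net α) : Set (Net α) :=
  {M | ∃ k, N.IsLevel k ∧ N.IsMLLS k M}

end Net

private lemma netext {X : Type} (A B : Net X) (h1 : A.verts = B.verts)
    (h2 : A.edges = B.edges) (h3 : A.lab = B.lab) : A = B := by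
  cases A; cases B; simp_all

private lemma fil_one {g : Type} [DecidableEq g] {s : Finset g} {a : g}
    (h : s.card = 1) (ha : a ∈ s) : s = {a} := by
  obtain ⟨b, rfl⟩ := Finset.card_eq_one.mp h
  have := Finset.mem_singleton.mp ha
  subst this; rfl

private lemma fil_two {g : Type} [DecidableEq g] {s : Finset g} {a : g}
    (h : s.card = 2) (ha : a ∈ s) : ∃ b, b ≠ a ∧ s = {a, b} := by
  obtain ⟨x, y, hxy, rfl⟩ := Finset.card_eq_two.mp h
  rcases Finset.mem_insert.mp ha with rfl | hy
  · exact ⟨y, fun hh => hxy hh.symm, rfl⟩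
  · have := Finset.mem_singleton.mp hy
    subst this
    exact ⟨x, hxy, Finset.pair_comm x a⟩

/-- Every reticulation edge of a binary tree-child network is valid:
deleting it and cleaning up removes exactly 2 nodes and 3 edges. -/
theorem treeChild_reticEdge_valid {X : Type} (N : Net X) (hN : N.TreeChild)
    (e : ℕ × ℕ) (he : N.IsReticEdge e) :
    ∀ M, Net.CleansTo (N.deleteEdge e) M →
      M.verts.card + 2 = N.verts.card ∧ M.edges.card + 3 = N.edges.card := by
  classical
  obtain ⟨u₀, r⟩ := e
  obtain ⟨⟨hends, hac, _hroot, hclass, hlabiff, _hlabu⟩, htc⟩ := hN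
  obtain ⟨heE, hrV, hrin, hrout⟩ : (u₀, r) ∈ N.edges ∧ r ∈ N.verts ∧
      N.indeg r = 2 ∧ N.outdeg r = 1 := ⟨he.1, he.2.1, he.2.2.1, he.2.2.2⟩
  have hnoself : ∀ x, (x, x) ∉ N.edges := fun x hx => hac x x hx Relation.ReflTransGen.refl
  have hur : u₀ ≠ r := by rintro rfl; exact hnoself _ heE
  have hu₀V : u₀ ∈ N.verts := (hends _ heE).1
  -- u₀ is a tree node
  have hu₀tree : N.indeg u₀ = 1 ∧ N.outdeg u₀ = 2 := by
    have hkey : N.outdeg u₀ = 1 → N.indeg u₀ ≠ 1 → False := by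
      intro ho1 hi
      have hfil : N.edges.filter (fun e => e.1 = u₀) = {(u₀, r)} :=
        fil_one ho1 (Finset.mem_filter.mpr ⟨heE, rfl⟩)
      have hnl : ¬ N.IsLeaf u₀ := fun hL => hi hL.2.1
      obtain ⟨tc, htce, htcl⟩ := htc u₀ hu₀V hnl
      have : (u₀, tc) ∈ ({(u₀, r)} : Finset (ℕ × ℕ)) := by
        rw [← hfil]; exact Finset.mem_filter.mpr ⟨htce, rfl⟩
      have htcr : tc = r := by simpa using this
      subst htcr
      rcases htcl with h | h
      · rw [h.2.1] at hrin; omega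
      · rw [h.2.1] at hrin; omega
    rcases hclass u₀ hu₀V with h | h | h | h
    · exact absurd (hkey h.2.2 (by rw [h.2.1]; omega)) not_false
    · exfalso
      have hm : (u₀, r) ∈ N.edges.filter (fun e => e.1 = u₀) :=
        Finset.mem_filter.mpr ⟨heE, rfl⟩
      have h0 : N.edges.filter (fun e => e.1 = u₀) = ∅ := Finset.card_eq_zero.mp h.2.2
      rw [h0] at hm; exact Finset.notMem_empty _ hm
    · exact ⟨h.2.1, h.2.2⟩
    · exfalso; exact hkey h.2.2 (by rw [h.2.1]; omega)
  obtain ⟨hdinu, hdoutu⟩ := hu₀tree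
  -- the parent pu of u₀
  obtain ⟨zu, hzu⟩ := Finset.card_eq_one.mp hdinu
  have hzum : zu ∈ N.edges.filter (fun e => e.2 = u₀) := by rw [hzu]; exact Finset.mem_singleton_self _
  obtain ⟨hzuE, hzu2⟩ := Finset.mem_filter.mp hzum
  set pu := zu.1 with hpudef
  have hzueq : zu = (pu, u₀) := Prod.ext rfl hzu2
  have hpuE : (pu, u₀) ∈ N.edges := hzueq ▸ hzuE
  have hin_u : N.edges.filter (fun e => e.2 = u₀) = {(pu, u₀)} := by rw [hzu, hzueq]
  -- the other child w of u₀
  obtain ⟨zw, hzwne, hout_u⟩ := fil_two hdoutu (Finset.mem_filter.mpr ⟨heE, rfl⟩)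
  have hzwm : zw ∈ N.edges.filter (fun e => e.1 = u₀) := by
    rw [hout_u]; exact Finset.mem_insert.mpr (Or.inr (Finset.mem_singleton_self _))
  obtain ⟨hzwE, hzw1⟩ := Finset.mem_filter.mp hzwm
  set w := zw.2 with hwdef
  have hzweq : zw = (u₀, w) := Prod.ext hzw1 rfl
  have huwE : (u₀, w) ∈ N.edges := hzweq ▸ hzwE
  have hout_u' : N.edges.filter (fun e => e.1 = u₀) = {(u₀, r), (u₀, w)} := by rw [hout_u, hzweq]
  have hwr : w ≠ r := fun h => hzwne (by rw [hzweq, h])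
  have hwu : w ≠ u₀ := fun h => hnoself u₀ (by rw [← h] at huwE ⊢; exact h ▸ huwE)
  -- the other parent p of r
  obtain ⟨zp, hzpne, hin_r0⟩ := fil_two hrin (Finset.mem_filter.mpr ⟨heE, rfl⟩)
  have hzpm : zp ∈ N.edges.filter (fun e => e.2 = r) := by
    rw [hin_r0]; exact Finset.mem_insert.mpr (Or.inr (Finset.mem_singleton_self _))
  obtain ⟨hzpE, hzp2⟩ := Finset.mem_filter.mp hzpm
  set p := zp.1 with hpdef
  have hzpeq : zp = (p, r) := Prod.ext rfl hzp2
  have hprE : (p, r) ∈ N.edges := hzpeq ▸ hzpE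
  have hin_r : N.edges.filter (fun e => e.2 = r) = {(u₀, r), (p, r)} := by rw [hin_r0, hzpeq]
  have hpne : p ≠ u₀ := fun h => hzpne (by rw [hzpeq, h])
  have hpr : p ≠ r := fun h => hnoself r (h ▸ hprE)
  -- the child c of r
  obtain ⟨zc, hzc⟩ := Finset.card_eq_one.mp hrout
  have hzcm : zc ∈ N.edges.filter (fun e => e.1 = r) := by rw [hzc]; exact Finset.mem_singleton_self _
  obtain ⟨hzcE, hzc1⟩ := Finset.mem_filter.mp hzcm
  set c := zc.2 with hcdef
  have hzceq : zc = (r, c) := Prod.ext hzc1 rfl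
  have hrcE : (r, c) ∈ N.edges := hzceq ▸ hzcE
  have hout_r : N.edges.filter (fun e => e.1 = r) = {(r, c)} := by rw [hzc, hzceq]
  have hcr : c ≠ r := fun h => hnoself r (h ▸ hrcE)
  have hcu : c ≠ u₀ := fun h => hac u₀ r heE (Relation.ReflTransGen.single (h ▸ hrcE))
  have hpuu : pu ≠ u₀ := fun h => hnoself u₀ (h ▸ hpuE)
  have hpur : pu ≠ r := fun h => hac u₀ r heE (Relation.ReflTransGen.single (h ▸ hpuE))
  -- unique-membership helpers
  have hin_u'' : ∀ a, (a, u₀) ∈ N.edges → a = pu := by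
    intro a h
    have : (a, u₀) ∈ N.edges.filter (fun e => e.2 = u₀) := Finset.mem_filter.mpr ⟨h, rfl⟩
    rw [hin_u] at this; exact congrArg Prod.fst (Finset.mem_singleton.mp this)
  have hout_u'' : ∀ b, (u₀, b) ∈ N.edges → b = r ∨ b = w := by
    intro b h
    have : (u₀, b) ∈ N.edges.filter (fun e => e.1 = u₀) := Finset.mem_filter.mpr ⟨h, rfl⟩
    rw [hout_u'] at this
    rcases Finset.mem_insert.mp this with h' | h'
    · exact Or.inl (congrArg Prod.snd h')
    · exact Or.inr (congrArg Prod.snd (Finset.mem_singleton.mp h'))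
  have hin_r'' : ∀ a, (a, r) ∈ N.edges → a = u₀ ∨ a = p := by
    intro a h
    have : (a, r) ∈ N.edges.filter (fun e => e.2 = r) := Finset.mem_filter.mpr ⟨h, rfl⟩
    rw [hin_r] at this
    rcases Finset.mem_insert.mp this with h' | h'
    · exact Or.inl (congrArg Prod.fst h')
    · exact Or.inr (congrArg Prod.fst (Finset.mem_singleton.mp h'))
  have hout_r'' : ∀ b, (r, b) ∈ N.edges → b = c := by
    intro b h
    have : (r, b) ∈ N.edges.filter (fun e => e.1 = r) := Finset.mem_filter.mpr ⟨h, rfl⟩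
    rw [hout_r] at this; exact congrArg Prod.snd (Finset.mem_singleton.mp this)
  -- tree-child consequences
  have hdinw : N.indeg w = 1 := by
    have hnl : ¬ N.IsLeaf u₀ := fun hL => by rw [hL.2.2] at hdoutu; omega
    obtain ⟨tc, htce, htcl⟩ := htc u₀ hu₀V hnl
    rcases hout_u'' tc htce with rfl | rfl
    · exfalso; rcases htcl with h | h <;> (rw [h.2.1] at hrin; omega)
    · rcases htcl with h | h
      · exact h.2.1
      · exact h.2.1
  have hdinc : N.indeg c = 1 := by
    have hnl : ¬ N.IsLeaf r := fun hL => by rw [hL.2.2] at hrout; omega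
    obtain ⟨tc, htce, htcl⟩ := htc r hrV hnl
    have := hout_r'' tc htce
    subst this
    rcases htcl with h | h
    · exact h.2.1
    · exact h.2.1
  have hin_w'' : ∀ a, (a, w) ∈ N.edges → a = u₀ := by
    intro a h
    have hfil : N.edges.filter (fun e => e.2 = w) = {(u₀, w)} :=
      fil_one hdinw (Finset.mem_filter.mpr ⟨huwE, rfl⟩)
    have : (a, w) ∈ N.edges.filter (fun e => e.2 = w) := Finset.mem_filter.mpr ⟨h, rfl⟩
    rw [hfil] at this; exact congrArg Prod.fst (Finset.mem_singleton.mp this)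
  have hin_c'' : ∀ a, (a, c) ∈ N.edges → a = r := by
    intro a h
    have hfil : N.edges.filter (fun e => e.2 = c) = {(r, c)} :=
      fil_one hdinc (Finset.mem_filter.mpr ⟨hrcE, rfl⟩)
    have : (a, c) ∈ N.edges.filter (fun e => e.2 = c) := Finset.mem_filter.mpr ⟨h, rfl⟩
    rw [hfil] at this; exact congrArg Prod.fst (Finset.mem_singleton.mp this)
  have hwc : w ≠ c := fun h => hur (hin_w'' r (h ▸ hrcE)).symm
  have hpuwE : (pu, w) ∉ N.edges := fun h => hpuu (hin_w'' pu h)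
  have hpcE : (p, c) ∉ N.edges := fun h => hpr (hin_c'' p h)
  -- stage edge sets
  set E0 : Finset (ℕ × ℕ) := N.edges.erase (u₀, r) with hE0
  set F1 : Finset (ℕ × ℕ) := E0.filter (fun x => x.1 ≠ u₀ ∧ x.2 ≠ u₀) with hF1
  set EA1 : Finset (ℕ × ℕ) := insert (pu, w) F1 with hEA1
  set F2 : Finset (ℕ × ℕ) := E0.filter (fun x => x.1 ≠ r ∧ x.2 ≠ r) with hF2
  set EA2 : Finset (ℕ × ℕ) := insert (p, c) F2 with hEA2
  set FB : Finset (ℕ × ℕ) := EA1.filter (fun x => x.1 ≠ r ∧ x.2 ≠ r) with hFB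
  set EB : Finset (ℕ × ℕ) := insert (p, c) FB with hEB
  set FB2 : Finset (ℕ × ℕ) := EA2.filter (fun x => x.1 ≠ u₀ ∧ x.2 ≠ u₀) with hFB2
  set EB2 : Finset (ℕ × ℕ) := insert (pu, w) FB2 with hEB2
  have hmemE0 : ∀ a b, (a, b) ∈ E0 ↔ ((a, b) ∈ N.edges ∧ (a, b) ≠ (u₀, r)) := by
    intro a b; rw [hE0, Finset.mem_erase]; tauto
  have hmemEA1 : ∀ a b, (a, b) ∈ EA1 ↔
      ((a, b) = (pu, w) ∨ ((a, b) ∈ N.edges ∧ a ≠ u₀ ∧ b ≠ u₀)) := by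
    intro a b
    rw [hEA1, Finset.mem_insert, hF1, Finset.mem_filter]
    constructor
    · rintro (h | ⟨h1, h2, h3⟩)
      · exact Or.inl h
      · exact Or.inr ⟨((hmemE0 a b).mp h1).1, h2, h3⟩
    · rintro (h | ⟨h1, h2, h3⟩)
      · exact Or.inl h
      · refine Or.inr ⟨(hmemE0 a b).mpr ⟨h1, ?_⟩, h2, h3⟩
        intro hh; exact h2 (congrArg Prod.fst hh)
  have hmemEA2 : ∀ a b, (a, b) ∈ EA2 ↔
      ((a, b) = (p, c) ∨ ((a, b) ∈ N.edges ∧ a ≠ r ∧ b ≠ r)) := by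
    intro a b
    rw [hEA2, Finset.mem_insert, hF2, Finset.mem_filter]
    constructor
    · rintro (h | ⟨h1, h2, h3⟩)
      · exact Or.inl h
      · exact Or.inr ⟨((hmemE0 a b).mp h1).1, h2, h3⟩
    · rintro (h | ⟨h1, h2, h3⟩)
      · exact Or.inl h
      · refine Or.inr ⟨(hmemE0 a b).mpr ⟨h1, ?_⟩, h2, h3⟩
        intro hh; exact h3 (congrArg Prod.snd hh)
  have hmemEB : ∀ a b, (a, b) ∈ EB ↔
      ((a, b) = (p, c) ∨ (a, b) = (pu, w) ∨
        ((a, b) ∈ N.edges ∧ a ≠ u₀ ∧ b ≠ u₀ ∧ a ≠ r ∧ b ≠ r)) := by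
    intro a b
    rw [hEB, Finset.mem_insert, hFB, Finset.mem_filter]
    constructor
    · rintro (h | ⟨h1, h2, h3⟩)
      · exact Or.inl h
      · rcases (hmemEA1 a b).mp h1 with h | ⟨h4, h5, h6⟩
        · exact Or.inr (Or.inl h)
        · exact Or.inr (Or.inr ⟨h4, h5, h6, h2, h3⟩)
    · rintro (h | h | ⟨h1, h2, h3, h4, h5⟩)
      · exact Or.inl h
      · refine Or.inr ⟨(hmemEA1 a b).mpr (Or.inl h), ?_, ?_⟩
        · rw [show a = pu from congrArg Prod.fst h]; exact hpur
        · rw [show b = w from congrArg Prod.snd h]; exact hwr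
      · exact Or.inr ⟨(hmemEA1 a b).mpr (Or.inr ⟨h1, h2, h3⟩), h4, h5⟩
  have hmemEB2 : ∀ a b, (a, b) ∈ EB2 ↔
      ((a, b) = (p, c) ∨ (a, b) = (pu, w) ∨
        ((a, b) ∈ N.edges ∧ a ≠ u₀ ∧ b ≠ u₀ ∧ a ≠ r ∧ b ≠ r)) := by
    intro a b
    rw [hEB2, Finset.mem_insert, hFB2, Finset.mem_filter]
    constructor
    · rintro (h | ⟨h1, h2, h3⟩)
      · exact Or.inr (Or.inl h)
      · rcases (hmemEA2 a b).mp h1 with h | ⟨h4, h5, h6⟩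
        · exact Or.inl h
        · exact Or.inr (Or.inr ⟨h4, h2, h3, h5, h6⟩)
    · rintro (h | h | ⟨h1, h2, h3, h4, h5⟩)
      · refine Or.inr ⟨(hmemEA2 a b).mpr (Or.inl h), ?_, ?_⟩
        · rw [show a = p from congrArg Prod.fst h]; exact hpne
        · rw [show b = c from congrArg Prod.snd h]; exact hcu
      · exact Or.inl h
      · exact Or.inr ⟨(hmemEA2 a b).mpr (Or.inr ⟨h1, h4, h5⟩), h2, h3⟩
  have hEB2eq : EB2 = EB := by
    apply Finset.ext; rintro ⟨a, b⟩; rw [hmemEB2, hmemEB]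
  -- degree facts at the special vertices
  have hE0inu : E0.filter (fun e => e.2 = u₀) = {(pu, u₀)} := by
    apply Finset.ext; rintro ⟨a, b⟩
    simp only [Finset.mem_filter, Finset.mem_singleton, Prod.mk.injEq]
    constructor
    · rintro ⟨h1, h2⟩; subst b
      exact ⟨hin_u'' a ((hmemE0 a u₀).mp h1).1, rfl⟩
    · rintro ⟨h1, h2⟩; subst a; subst b
      exact ⟨(hmemE0 pu u₀).mpr ⟨hpuE, fun hh => hur (congrArg Prod.snd hh)⟩, rfl⟩
  have hE0outu : E0.filter (fun e => e.1 = u₀) = {(u₀, w)} := by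
    apply Finset.ext; rintro ⟨a, b⟩
    simp only [Finset.mem_filter, Finset.mem_singleton, Prod.mk.injEq]
    constructor
    · rintro ⟨h1, h2⟩; subst a
      obtain ⟨hE, hne⟩ := (hmemE0 u₀ b).mp h1
      rcases hout_u'' b hE with rfl | rfl
      · exact absurd rfl hne
      · exact ⟨rfl, rfl⟩
    · rintro ⟨h1, h2⟩; subst a; subst b
      exact ⟨(hmemE0 u₀ w).mpr ⟨huwE, fun hh => hwr (congrArg Prod.snd hh)⟩, rfl⟩
  have hE0inr : E0.filter (fun e => e.2 = r) = {(p, r)} := by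
    apply Finset.ext; rintro ⟨a, b⟩
    simp only [Finset.mem_filter, Finset.mem_singleton, Prod.mk.injEq]
    constructor
    · rintro ⟨h1, h2⟩; subst b
      obtain ⟨hE, hne⟩ := (hmemE0 a r).mp h1
      rcases hin_r'' a hE with rfl | rfl
      · exact absurd rfl hne
      · exact ⟨rfl, rfl⟩
    · rintro ⟨h1, h2⟩; subst a; subst b
      exact ⟨(hmemE0 p r).mpr ⟨hprE, fun hh => hpne (congrArg Prod.fst hh)⟩, rfl⟩
  have hE0outr : E0.filter (fun e => e.1 = r) = {(r, c)} := by
    apply Finset.ext; rintro ⟨a, b⟩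
    simp only [Finset.mem_filter, Finset.mem_singleton, Prod.mk.injEq]
    constructor
    · rintro ⟨h1, h2⟩; subst a
      exact ⟨rfl, hout_r'' b ((hmemE0 r b).mp h1).1⟩
    · rintro ⟨h1, h2⟩; subst a; subst b
      exact ⟨(hmemE0 r c).mpr ⟨hrcE, fun hh => hur (congrArg Prod.fst hh).symm⟩, rfl⟩
  have hEA1inr : EA1.filter (fun e => e.2 = r) = {(p, r)} := by
    apply Finset.ext; rintro ⟨a, b⟩
    simp only [Finset.mem_filter, Finset.mem_singleton, Prod.mk.injEq]
    constructor
    · rintro ⟨h1, h2⟩; subst b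
      rcases (hmemEA1 a r).mp h1 with h | ⟨hE, hne, -⟩
      · exact absurd (congrArg Prod.snd h) hwr.symm
      · rcases hin_r'' a hE with rfl | rfl
        · exact absurd rfl hne
        · exact ⟨rfl, rfl⟩
    · rintro ⟨h1, h2⟩; subst a; subst b
      exact ⟨(hmemEA1 p r).mpr (Or.inr ⟨hprE, hpne, hur.symm⟩), rfl⟩
  have hEA1outr : EA1.filter (fun e => e.1 = r) = {(r, c)} := by
    apply Finset.ext; rintro ⟨a, b⟩
    simp only [Finset.mem_filter, Finset.mem_singleton, Prod.mk.injEq]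
    constructor
    · rintro ⟨h1, h2⟩; subst a
      rcases (hmemEA1 r b).mp h1 with h | ⟨hE, -, -⟩
      · exact absurd (congrArg Prod.fst h) hpur.symm
      · exact ⟨rfl, hout_r'' b hE⟩
    · rintro ⟨h1, h2⟩; subst a; subst b
      exact ⟨(hmemEA1 r c).mpr (Or.inr ⟨hrcE, hur.symm, hcu⟩), rfl⟩
  have hEA2inu : EA2.filter (fun e => e.2 = u₀) = {(pu, u₀)} := by
    apply Finset.ext; rintro ⟨a, b⟩
    simp only [Finset.mem_filter, Finset.mem_singleton, Prod.mk.injEq]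
    constructor
    · rintro ⟨h1, h2⟩; subst b
      rcases (hmemEA2 a u₀).mp h1 with h | ⟨hE, -, -⟩
      · exact absurd (congrArg Prod.snd h) hcu.symm
      · exact ⟨hin_u'' a hE, rfl⟩
    · rintro ⟨h1, h2⟩; subst a; subst b
      exact ⟨(hmemEA2 pu u₀).mpr (Or.inr ⟨hpuE, hpur, hur⟩), rfl⟩
  have hEA2outu : EA2.filter (fun e => e.1 = u₀) = {(u₀, w)} := by
    apply Finset.ext; rintro ⟨a, b⟩
    simp only [Finset.mem_filter, Finset.mem_singleton, Prod.mk.injEq]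
    constructor
    · rintro ⟨h1, h2⟩; subst a
      rcases (hmemEA2 u₀ b).mp h1 with h | ⟨hE, -, hne⟩
      · exact absurd (congrArg Prod.fst h) hpne.symm
      · rcases hout_u'' b hE with rfl | rfl
        · exact absurd rfl hne
        · exact ⟨rfl, rfl⟩
    · rintro ⟨h1, h2⟩; subst a; subst b
      exact ⟨(hmemEA2 u₀ w).mpr (Or.inr ⟨huwE, hur, hwr⟩), rfl⟩
  -- cardinalities
  have hcE0 : E0.card + 1 = N.edges.card := Finset.card_erase_add_one heE
  have hcF1 : F1.card + 2 = E0.card := by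
    have hcompl : E0.filter (fun x => ¬(x.1 ≠ u₀ ∧ x.2 ≠ u₀)) = {(pu, u₀), (u₀, w)} := by
      apply Finset.ext; rintro ⟨a, b⟩
      simp only [Finset.mem_filter, Finset.mem_insert, Finset.mem_singleton, not_and_or,
        not_not, Prod.mk.injEq]
      constructor
      · rintro ⟨h1, h2 | h2⟩
        · subst a
          have : (u₀, b) ∈ E0.filter (fun e => e.1 = u₀) := Finset.mem_filter.mpr ⟨h1, rfl⟩
          rw [hE0outu] at this
          have := Finset.mem_singleton.mp this
          exact Or.inr ⟨congrArg Prod.fst this, congrArg Prod.snd this⟩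
        · subst b
          have : (a, u₀) ∈ E0.filter (fun e => e.2 = u₀) := Finset.mem_filter.mpr ⟨h1, rfl⟩
          rw [hE0inu] at this
          have := Finset.mem_singleton.mp this
          exact Or.inl ⟨congrArg Prod.fst this, congrArg Prod.snd this⟩
      · rintro (⟨h1, h2⟩ | ⟨h1, h2⟩) <;> subst a <;> subst b
        · exact ⟨(hmemE0 pu u₀).mpr ⟨hpuE, fun hh => hur (congrArg Prod.snd hh)⟩,
            Or.inr rfl⟩
        · exact ⟨(hmemE0 u₀ w).mpr ⟨huwE, fun hh => hwr (congrArg Prod.snd hh)⟩,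
            Or.inl rfl⟩
    have hsum := Finset.card_filter_add_card_filter_not
      (s := E0) (p := fun x => x.1 ≠ u₀ ∧ x.2 ≠ u₀)
    rw [hcompl] at hsum
    have hpair : ({(pu, u₀), (u₀, w)} : Finset (ℕ × ℕ)).card = 2 :=
      Finset.card_pair (fun hh => hpuu (congrArg Prod.fst hh))
    rw [hpair] at hsum
    rw [← hsum, hF1]
  have hpuwF1 : (pu, w) ∉ F1 := by
    intro hh
    have := Finset.mem_filter.mp hh
    exact hpuwE ((hmemE0 pu w).mp this.1).1
  have hcEA1 : EA1.card = F1.card + 1 := by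
    rw [hEA1, Finset.card_insert_of_notMem hpuwF1]
  have hcFB : FB.card + 2 = EA1.card := by
    have hcompl : EA1.filter (fun x => ¬(x.1 ≠ r ∧ x.2 ≠ r)) = {(p, r), (r, c)} := by
      apply Finset.ext; rintro ⟨a, b⟩
      simp only [Finset.mem_filter, Finset.mem_insert, Finset.mem_singleton, not_and_or,
        not_not, Prod.mk.injEq]
      constructor
      · rintro ⟨h1, h2 | h2⟩
        · subst a
          have : (r, b) ∈ EA1.filter (fun e => e.1 = r) := Finset.mem_filter.mpr ⟨h1, rfl⟩
          rw [hEA1outr] at this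
          have := Finset.mem_singleton.mp this
          exact Or.inr ⟨congrArg Prod.fst this, congrArg Prod.snd this⟩
        · subst b
          have : (a, r) ∈ EA1.filter (fun e => e.2 = r) := Finset.mem_filter.mpr ⟨h1, rfl⟩
          rw [hEA1inr] at this
          have := Finset.mem_singleton.mp this
          exact Or.inl ⟨congrArg Prod.fst this, congrArg Prod.snd this⟩
      · rintro (⟨h1, h2⟩ | ⟨h1, h2⟩) <;> subst a <;> subst b
        · exact ⟨(hmemEA1 p r).mpr (Or.inr ⟨hprE, hpne, hur.symm⟩), Or.inr rfl⟩
        · exact ⟨(hmemEA1 r c).mpr (Or.inr ⟨hrcE, hur.symm, hcu⟩), Or.inl rfl⟩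
    have hsum := Finset.card_filter_add_card_filter_not
      (s := EA1) (p := fun x => x.1 ≠ r ∧ x.2 ≠ r)
    rw [hcompl] at hsum
    have hpair : ({(p, r), (r, c)} : Finset (ℕ × ℕ)).card = 2 :=
      Finset.card_pair (fun hh => hpr (congrArg Prod.fst hh))
    rw [hpair] at hsum
    rw [← hsum, hFB]
  have hpcFB : (p, c) ∉ FB := by
    intro hh
    have := Finset.mem_filter.mp hh
    rcases (hmemEA1 p c).mp this.1 with h | h
    · exact hwc ((congrArg Prod.snd h)).symm
    · exact hpcE h.1
  have hcEB : EB.card = FB.card + 1 := by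
    rw [hEB, Finset.card_insert_of_notMem hpcFB]
  have hcEBtot : EB.card + 3 = N.edges.card := by omega
  -- generic kill lemma
  have kill : ∀ EK : Finset (ℕ × ℕ),
      (∀ x ∈ EK, x = (p, c) ∨ x = (pu, w) ∨ x ∈ N.edges) →
      (∀ v y, v ≠ u₀ → v ≠ r → (v, y) ∈ N.edges →
        ∃ y', (v, y') ∈ EK ∧ (y' = y ∨ (y = u₀ ∧ y' = w) ∨ (y = r ∧ y' = c))) →
      (∀ a v, v ≠ u₀ → v ≠ r → v ≠ w → v ≠ c → (a, v) ∈ N.edges → (a, v) ∈ EK) →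
      ∀ v, v ∈ N.verts → v ≠ u₀ → v ≠ r →
        (N.lab v = none → (EK.filter (fun e => e.1 = v)).card ≠ 0) ∧
        ¬(((EK.filter (fun e => e.2 = v)).card = 1) ∧
          (EK.filter (fun e => e.1 = v)).card = 1) := by
    intro EK hsub hso hsi v hvV hvu hvr
    have houtpos : ∀ y, (v, y) ∈ N.edges → (EK.filter (fun e => e.1 = v)).card ≠ 0 := by
      intro y hy h0
      obtain ⟨y', hy', -⟩ := hso v y hvu hvr hy
      have hm : (v, y') ∈ EK.filter (fun e => e.1 = v) := Finset.mem_filter.mpr ⟨hy', rfl⟩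
      rw [Finset.card_eq_zero.mp h0] at hm
      exact Finset.notMem_empty _ hm
    have hout1 : ∀ n, N.outdeg v = n → 1 ≤ n →
        (N.lab v = none → (EK.filter (fun e => e.1 = v)).card ≠ 0) := by
      intro n hn h1 _
      have hne : (N.edges.filter (fun e => e.1 = v)).Nonempty := by
        rw [← Finset.card_pos]
        have : (N.edges.filter (fun e => e.1 = v)).card = n := hn
        omega
      obtain ⟨⟨v', y⟩, hmem⟩ := hne
      obtain ⟨hE, hv'⟩ := Finset.mem_filter.mp hmem
      have hv'' : v' = v := hv'
      subst v'
      exact houtpos y hE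
    rcases hclass v hvV with hR | hL | hT | hRe
    · -- root
      refine ⟨hout1 1 hR.2.2 le_rfl, ?_⟩
      rintro ⟨hdin1, -⟩
      have hd0 : N.edges.filter (fun e => e.2 = v) = ∅ := Finset.card_eq_zero.mp hR.2.1
      have hempty : EK.filter (fun e => e.2 = v) = ∅ := by
        rw [Finset.eq_empty_iff_forall_notMem]
        rintro ⟨a, v'⟩ hmem
        obtain ⟨hmemEK, hv'⟩ := Finset.mem_filter.mp hmem
        have hv'' : v' = v := hv'
        subst v'
        have hinE : ∀ b', (b', v) ∈ N.edges → False := by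
          intro b' hb'
          have : (b', v) ∈ N.edges.filter (fun e => e.2 = v) := Finset.mem_filter.mpr ⟨hb', rfl⟩
          rw [hd0] at this; exact Finset.notMem_empty _ this
        rcases hsub _ hmemEK with h | h | h
        · have hvc : v = c := congrArg Prod.snd h
          exact hinE r (hvc ▸ hrcE)
        · have hvw : v = w := congrArg Prod.snd h
          exact hinE u₀ (hvw ▸ huwE)
        · exact hinE a h
      rw [hempty] at hdin1; simp at hdin1
    · -- leaf
      refine ⟨?_, ?_⟩
      · intro hnone
        obtain ⟨x, hx⟩ := (hlabiff v).mpr hL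
        rw [hnone] at hx; exact absurd hx (by simp)
      · rintro ⟨-, hdout1⟩
        have hd0 : N.edges.filter (fun e => e.1 = v) = ∅ := Finset.card_eq_zero.mp hL.2.2
        have hempty : EK.filter (fun e => e.1 = v) = ∅ := by
          rw [Finset.eq_empty_iff_forall_notMem]
          rintro ⟨v', b⟩ hmem
          obtain ⟨hmemEK, hv'⟩ := Finset.mem_filter.mp hmem
          have hv'' : v' = v := hv'
          subst v'
          have hinE : ∀ b', (v, b') ∈ N.edges → False := by
            intro b' hb'
            have : (v, b') ∈ N.edges.filter (fun e => e.1 = v) := Finset.mem_filter.mpr ⟨hb', rfl⟩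
            rw [hd0] at this; exact Finset.notMem_empty _ this
          rcases hsub _ hmemEK with h | h | h
          · have hvp : v = p := congrArg Prod.fst h
            exact hinE r (hvp ▸ hprE)
          · have hvpu : v = pu := congrArg Prod.fst h
            exact hinE u₀ (hvpu ▸ hpuE)
          · exact hinE b h
        rw [hempty] at hdout1; simp at hdout1
    · -- tree node
      refine ⟨hout1 2 hT.2.2 (by omega), ?_⟩
      rintro ⟨-, hdout1⟩
      obtain ⟨z1, z2, hz12, hset⟩ := Finset.card_eq_two.mp (hT.2.2 :
        (N.edges.filter (fun e => e.1 = v)).card = 2)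
      have hz1m : z1 ∈ N.edges.filter (fun e => e.1 = v) := by
        rw [hset]; exact Finset.mem_insert_self _ _
      have hz2m : z2 ∈ N.edges.filter (fun e => e.1 = v) := by
        rw [hset]; exact Finset.mem_insert.mpr (Or.inr (Finset.mem_singleton_self _))
      obtain ⟨hz1E, hz11⟩ := Finset.mem_filter.mp hz1m
      obtain ⟨hz2E, hz21⟩ := Finset.mem_filter.mp hz2m
      have hz1eq : z1 = (v, z1.2) := Prod.ext hz11 rfl
      have hz2eq : z2 = (v, z2.2) := Prod.ext hz21 rfl
      have hy12 : z1.2 ≠ z2.2 := by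
        intro hh; apply hz12; rw [hz1eq, hz2eq, hh]
      have hy1E : (v, z1.2) ∈ N.edges := hz1eq ▸ hz1E
      have hy2E : (v, z2.2) ∈ N.edges := hz2eq ▸ hz2E
      obtain ⟨y1', hy1'm, hy1's⟩ := hso v z1.2 hvu hvr hy1E
      obtain ⟨y2', hy2'm, hy2's⟩ := hso v z2.2 hvu hvr hy2E
      have hkeyw : ∀ y, (v, y) ∈ N.edges → y ≠ w := fun y hy hh => hvu (hin_w'' v (hh ▸ hy))
      have hkeyc : ∀ y, (v, y) ∈ N.edges → y ≠ c := fun y hy hh => hvr (hin_c'' v (hh ▸ hy))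
      have hne : y1' ≠ y2' := by
        intro hh
        rcases hy1's with h1 | ⟨h1u, h1w⟩ | ⟨h1r, h1c⟩ <;>
          rcases hy2's with h2 | ⟨h2u, h2w⟩ | ⟨h2r, h2c⟩
        · rw [h1, h2] at hh; exact hy12 hh
        · rw [h1, h2w] at hh; exact hkeyw z1.2 hy1E hh
        · rw [h1, h2c] at hh; exact hkeyc z1.2 hy1E hh
        · rw [h1w, h2] at hh; exact hkeyw z2.2 hy2E hh.symm
        · exact hy12 (h1u.trans h2u.symm)
        · rw [h1w, h2c] at hh; exact hwc hh
        · rw [h1c, h2] at hh; exact hkeyc z2.2 hy2E hh.symm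
        · rw [h1c, h2w] at hh; exact hwc hh.symm
        · exact hy12 (h1r.trans h2r.symm)
      have h2le : 1 < (EK.filter (fun e => e.1 = v)).card := by
        apply Finset.one_lt_card.mpr
        refine ⟨(v, y1'), Finset.mem_filter.mpr ⟨hy1'm, rfl⟩,
          (v, y2'), Finset.mem_filter.mpr ⟨hy2'm, rfl⟩, ?_⟩
        intro hh; exact hne (congrArg Prod.snd hh)
      omega
    · -- reticulation
      refine ⟨hout1 1 hRe.2.2 le_rfl, ?_⟩
      rintro ⟨hdin1, -⟩
      have hvw : v ≠ w := by
        intro hh; have h2 := hRe.2.1; rw [hh, hdinw] at h2; omega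
      have hvc : v ≠ c := by
        intro hh; have h2 := hRe.2.1; rw [hh, hdinc] at h2; omega
      obtain ⟨z1, z2, hz12, hset⟩ := Finset.card_eq_two.mp (hRe.2.1 :
        (N.edges.filter (fun e => e.2 = v)).card = 2)
      have hz1m : z1 ∈ N.edges.filter (fun e => e.2 = v) := by
        rw [hset]; exact Finset.mem_insert_self _ _
      have hz2m : z2 ∈ N.edges.filter (fun e => e.2 = v) := by
        rw [hset]; exact Finset.mem_insert.mpr (Or.inr (Finset.mem_singleton_self _))
      obtain ⟨hz1E, hz12'⟩ := Finset.mem_filter.mp hz1m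
      obtain ⟨hz2E, hz22'⟩ := Finset.mem_filter.mp hz2m
      have hz1eq : z1 = (z1.1, v) := Prod.ext rfl hz12'
      have hz2eq : z2 = (z2.1, v) := Prod.ext rfl hz22'
      have ha12 : z1.1 ≠ z2.1 := by
        intro hh; apply hz12; rw [hz1eq, hz2eq, hh]
      have ha1E : (z1.1, v) ∈ N.edges := hz1eq ▸ hz1E
      have ha2E : (z2.1, v) ∈ N.edges := hz2eq ▸ hz2E
      have h2le : 1 < (EK.filter (fun e => e.2 = v)).card := by
        apply Finset.one_lt_card.mpr
        refine ⟨(z1.1, v), Finset.mem_filter.mpr ⟨hsi _ _ hvu hvr hvw hvc ha1E, rfl⟩,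
          (z2.1, v), Finset.mem_filter.mpr ⟨hsi _ _ hvu hvr hvw hvc ha2E, rfl⟩, ?_⟩
        intro hh; injection hh with h1 h2; exact ha12 h1
      omega
  -- survival lemmas per stage
  have subE0 : ∀ x ∈ E0, x = (p, c) ∨ x = (pu, w) ∨ x ∈ N.edges :=
    fun x hx => Or.inr (Or.inr (Finset.mem_of_mem_erase hx))
  have soE0 : ∀ v y, v ≠ u₀ → v ≠ r → (v, y) ∈ N.edges →
      ∃ y', (v, y') ∈ E0 ∧ (y' = y ∨ (y = u₀ ∧ y' = w) ∨ (y = r ∧ y' = c)) :=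
    fun v y hvu _ hE =>
      ⟨y, (hmemE0 v y).mpr ⟨hE, fun hh => hvu (congrArg Prod.fst hh)⟩, Or.inl rfl⟩
  have siE0 : ∀ a v, v ≠ u₀ → v ≠ r → v ≠ w → v ≠ c → (a, v) ∈ N.edges → (a, v) ∈ E0 :=
    fun a v _ hvr _ _ hE =>
      (hmemE0 a v).mpr ⟨hE, fun hh => hvr (congrArg Prod.snd hh)⟩
  have subEA1 : ∀ x ∈ EA1, x = (p, c) ∨ x = (pu, w) ∨ x ∈ N.edges := by
    rintro ⟨a, b⟩ hx
    rcases (hmemEA1 a b).mp hx with h | h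
    · exact Or.inr (Or.inl h)
    · exact Or.inr (Or.inr h.1)
  have soEA1 : ∀ v y, v ≠ u₀ → v ≠ r → (v, y) ∈ N.edges →
      ∃ y', (v, y') ∈ EA1 ∧ (y' = y ∨ (y = u₀ ∧ y' = w) ∨ (y = r ∧ y' = c)) := by
    intro v y hvu hvr hE
    by_cases hyu : y = u₀
    · rw [hyu] at hE
      have hv : v = pu := hin_u'' v hE
      exact ⟨w, (hmemEA1 v w).mpr (Or.inl (by rw [hv])), Or.inr (Or.inl ⟨hyu, rfl⟩)⟩
    · exact ⟨y, (hmemEA1 v y).mpr (Or.inr ⟨hE, hvu, hyu⟩), Or.inl rfl⟩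
  have siEA1 : ∀ a v, v ≠ u₀ → v ≠ r → v ≠ w → v ≠ c → (a, v) ∈ N.edges → (a, v) ∈ EA1 := by
    intro a v hvu hvr hvw hvc hE
    have hau : a ≠ u₀ := by
      intro hh; rw [hh] at hE
      rcases hout_u'' v hE with hh | hh
      · exact hvr hh
      · exact hvw hh
    exact (hmemEA1 a v).mpr (Or.inr ⟨hE, hau, hvu⟩)
  have subEA2 : ∀ x ∈ EA2, x = (p, c) ∨ x = (pu, w) ∨ x ∈ N.edges := by
    rintro ⟨a, b⟩ hx
    rcases (hmemEA2 a b).mp hx with h | h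
    · exact Or.inl h
    · exact Or.inr (Or.inr h.1)
  have soEA2 : ∀ v y, v ≠ u₀ → v ≠ r → (v, y) ∈ N.edges →
      ∃ y', (v, y') ∈ EA2 ∧ (y' = y ∨ (y = u₀ ∧ y' = w) ∨ (y = r ∧ y' = c)) := by
    intro v y hvu hvr hE
    by_cases hyr : y = r
    · rw [hyr] at hE
      have hv : v = p := by
        rcases hin_r'' v hE with hh | hh
        · exact absurd hh hvu
        · exact hh
      exact ⟨c, (hmemEA2 v c).mpr (Or.inl (by rw [hv])), Or.inr (Or.inr ⟨hyr, rfl⟩)⟩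
    · exact ⟨y, (hmemEA2 v y).mpr (Or.inr ⟨hE, hvr, hyr⟩), Or.inl rfl⟩
  have siEA2 : ∀ a v, v ≠ u₀ → v ≠ r → v ≠ w → v ≠ c → (a, v) ∈ N.edges → (a, v) ∈ EA2 := by
    intro a v hvu hvr hvw hvc hE
    have har : a ≠ r := by
      intro hh; rw [hh] at hE; exact hvc (hout_r'' v hE)
    exact (hmemEA2 a v).mpr (Or.inr ⟨hE, har, hvr⟩)
  have subEB : ∀ x ∈ EB, x = (p, c) ∨ x = (pu, w) ∨ x ∈ N.edges := by
    rintro ⟨a, b⟩ hx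
    rcases (hmemEB a b).mp hx with h | h | h
    · exact Or.inl h
    · exact Or.inr (Or.inl h)
    · exact Or.inr (Or.inr h.1)
  have soEB : ∀ v y, v ≠ u₀ → v ≠ r → (v, y) ∈ N.edges →
      ∃ y', (v, y') ∈ EB ∧ (y' = y ∨ (y = u₀ ∧ y' = w) ∨ (y = r ∧ y' = c)) := by
    intro v y hvu hvr hE
    by_cases hyu : y = u₀
    · rw [hyu] at hE
      have hv : v = pu := hin_u'' v hE
      exact ⟨w, (hmemEB v w).mpr (Or.inr (Or.inl (by rw [hv]))), Or.inr (Or.inl ⟨hyu, rfl⟩)⟩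
    by_cases hyr : y = r
    · rw [hyr] at hE
      have hv : v = p := by
        rcases hin_r'' v hE with hh | hh
        · exact absurd hh hvu
        · exact hh
      exact ⟨c, (hmemEB v c).mpr (Or.inl (by rw [hv])), Or.inr (Or.inr ⟨hyr, rfl⟩)⟩
    · exact ⟨y, (hmemEB v y).mpr (Or.inr (Or.inr ⟨hE, hvu, hyu, hvr, hyr⟩)), Or.inl rfl⟩
  have siEB : ∀ a v, v ≠ u₀ → v ≠ r → v ≠ w → v ≠ c → (a, v) ∈ N.edges → (a, v) ∈ EB := by
    intro a v hvu hvr hvw hvc hE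
    have hau : a ≠ u₀ := by
      intro hh; rw [hh] at hE
      rcases hout_u'' v hE with hh | hh
      · exact hvr hh
      · exact hvw hh
    have har : a ≠ r := by
      intro hh; rw [hh] at hE; exact hvc (hout_r'' v hE)
    exact (hmemEB a v).mpr (Or.inr (Or.inr ⟨hE, hau, hvu, har, hvr⟩))
  have hwV : w ∈ N.verts := (hends _ huwE).2
  have hcV : c ∈ N.verts := (hends _ hrcE).2
  -- memberships of the special edges in the stage sets
  have hpuE0 : (pu, u₀) ∈ E0 :=
    (hmemE0 pu u₀).mpr ⟨hpuE, fun hh => hur (congrArg Prod.snd hh)⟩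
  have huwE0 : (u₀, w) ∈ E0 :=
    (hmemE0 u₀ w).mpr ⟨huwE, fun hh => hwr (congrArg Prod.snd hh)⟩
  have hprEA1 : (p, r) ∈ EA1 := (hmemEA1 p r).mpr (Or.inr ⟨hprE, hpne, hur.symm⟩)
  have hrcEA1 : (r, c) ∈ EA1 := (hmemEA1 r c).mpr (Or.inr ⟨hrcE, hur.symm, hcu⟩)
  have hpuEA2 : (pu, u₀) ∈ EA2 := (hmemEA2 pu u₀).mpr (Or.inr ⟨hpuE, hpur, hur⟩)
  have huwEA2 : (u₀, w) ∈ EA2 := (hmemEA2 u₀ w).mpr (Or.inr ⟨huwE, hur, hwr⟩)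
  -- existence of the three clean-up steps
  have hstep1 : Net.CleanStep (N.deleteEdge (u₀, r)) (⟨N.verts.erase u₀, EA1, N.lab⟩ : Net X) := by
    have h1 : (N.deleteEdge (u₀, r)).indeg u₀ = 1 := by
      show (E0.filter (fun e => e.2 = u₀)).card = 1
      rw [hE0inu]; rfl
    have h2 : (N.deleteEdge (u₀, r)).outdeg u₀ = 1 := by
      show (E0.filter (fun e => e.1 = u₀)).card = 1
      rw [hE0outu]; rfl
    exact Net.CleanStep.suppress (N.deleteEdge (u₀, r)) pu u₀ w h1 h2 hpuE0 huwE0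
  have hstep2 : Net.CleanStep (⟨N.verts.erase u₀, EA1, N.lab⟩ : Net X)
      (⟨(N.verts.erase u₀).erase r, EB, N.lab⟩ : Net X) := by
    have h1 : (⟨N.verts.erase u₀, EA1, N.lab⟩ : Net X).indeg r = 1 := by
      show (EA1.filter (fun e => e.2 = r)).card = 1
      rw [hEA1inr]; rfl
    have h2 : (⟨N.verts.erase u₀, EA1, N.lab⟩ : Net X).outdeg r = 1 := by
      show (EA1.filter (fun e => e.1 = r)).card = 1
      rw [hEA1outr]; rfl
    exact Net.CleanStep.suppress _ p r c h1 h2 hprEA1 hrcEA1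
  have hstep2' : Net.CleanStep (⟨N.verts.erase r, EA2, N.lab⟩ : Net X)
      (⟨(N.verts.erase r).erase u₀, EB2, N.lab⟩ : Net X) := by
    have h1 : (⟨N.verts.erase r, EA2, N.lab⟩ : Net X).indeg u₀ = 1 := by
      show (EA2.filter (fun e => e.2 = u₀)).card = 1
      rw [hEA2inu]; rfl
    have h2 : (⟨N.verts.erase r, EA2, N.lab⟩ : Net X).outdeg u₀ = 1 := by
      show (EA2.filter (fun e => e.1 = u₀)).card = 1
      rw [hEA2outu]; rfl
    exact Net.CleanStep.suppress _ pu u₀ w h1 h2 hpuEA2 huwEA2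
  have hB2B : (⟨(N.verts.erase r).erase u₀, EB2, N.lab⟩ : Net X)
      = (⟨(N.verts.erase u₀).erase r, EB, N.lab⟩ : Net X) := by
    refine netext _ _ ?_ hEB2eq rfl
    show (N.verts.erase r).erase u₀ = (N.verts.erase u₀).erase r
    ext a; simp only [Finset.mem_erase]; tauto
  -- step uniqueness at each stage
  have stepN' : ∀ M', Net.CleanStep (N.deleteEdge (u₀, r)) M' →
      M' = (⟨N.verts.erase u₀, EA1, N.lab⟩ : Net X) ∨
      M' = (⟨N.verts.erase r, EA2, N.lab⟩ : Net X) := by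
    intro M' hstep
    cases hstep with
    | delNode v hv h0 hlab =>
      exfalso
      have hvV : v ∈ N.verts := hv
      have h0' : (E0.filter (fun e => e.1 = v)).card = 0 := h0
      by_cases hvu : v = u₀
      · rw [hvu, hE0outu] at h0'; simp at h0'
      by_cases hvr : v = r
      · rw [hvr, hE0outr] at h0'; simp at h0'
      · exact (kill E0 subE0 soE0 siE0 v hvV hvu hvr).1 hlab h0'
    | suppress a v b h1 h2 hu hw2 =>
      have h1' : (E0.filter (fun e => e.2 = v)).card = 1 := h1
      have h2' : (E0.filter (fun e => e.1 = v)).card = 1 := h2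
      have huE : (a, v) ∈ E0 := hu
      have hwE2 : (v, b) ∈ E0 := hw2
      by_cases hvu : v = u₀
      · left
        rw [hvu] at huE hwE2
        have ha : a = pu := hin_u'' a (Finset.mem_of_mem_erase huE)
        have hb : b = w := by
          obtain ⟨hE, hne⟩ := (hmemE0 u₀ b).mp hwE2
          rcases hout_u'' b hE with hh | hh
          · exact absurd (by rw [hh]) hne
          · exact hh
        rw [hvu, ha, hb]; rfl
      by_cases hvr : v = r
      · right
        rw [hvr] at huE hwE2
        have ha : a = p := by
          obtain ⟨hE, hne⟩ := (hmemE0 a r).mp huE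
          rcases hin_r'' a hE with hh | hh
          · exact absurd (by rw [hh]) hne
          · exact hh
        have hb : b = c := hout_r'' b (Finset.mem_of_mem_erase hwE2)
        rw [hvr, ha, hb]; rfl
      · exfalso
        have hvV : v ∈ N.verts := (hends _ (Finset.mem_of_mem_erase huE)).2
        exact (kill E0 subE0 soE0 siE0 v hvV hvu hvr).2 ⟨h1', h2'⟩
  have stepA1 : ∀ M', Net.CleanStep (⟨N.verts.erase u₀, EA1, N.lab⟩ : Net X) M' →
      M' = (⟨(N.verts.erase u₀).erase r, EB, N.lab⟩ : Net X) := by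
    intro M' hstep
    cases hstep with
    | delNode v hv h0 hlab =>
      exfalso
      obtain ⟨hvu, hvV⟩ := Finset.mem_erase.mp (hv : v ∈ N.verts.erase u₀)
      have h0' : (EA1.filter (fun e => e.1 = v)).card = 0 := h0
      by_cases hvr : v = r
      · rw [hvr, hEA1outr] at h0'; simp at h0'
      · exact (kill EA1 subEA1 soEA1 siEA1 v hvV hvu hvr).1 hlab h0'
    | suppress a v b h1 h2 hu hw2 =>
      have h1' : (EA1.filter (fun e => e.2 = v)).card = 1 := h1
      have h2' : (EA1.filter (fun e => e.1 = v)).card = 1 := h2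
      have huE : (a, v) ∈ EA1 := hu
      have hwE2 : (v, b) ∈ EA1 := hw2
      have hvu : v ≠ u₀ := by
        rcases (hmemEA1 a v).mp huE with hh | hh
        · rw [show v = w from congrArg Prod.snd hh]; exact hwu
        · exact hh.2.2
      by_cases hvr : v = r
      · rw [hvr] at huE hwE2
        have ha : a = p := by
          rcases (hmemEA1 a r).mp huE with hh | hh
          · exact absurd (congrArg Prod.snd hh) hwr.symm
          · rcases hin_r'' a hh.1 with h3 | h3
            · exact absurd h3 hh.2.1
            · exact h3
        have hb : b = c := by
          rcases (hmemEA1 r b).mp hwE2 with hh | hh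
          · exact absurd (congrArg Prod.fst hh) hpur.symm
          · exact hout_r'' b hh.1
        rw [hvr, ha, hb]
      · exfalso
        have hvV : v ∈ N.verts := by
          rcases (hmemEA1 a v).mp huE with hh | hh
          · rw [show v = w from congrArg Prod.snd hh]; exact hwV
          · exact (hends _ hh.1).2
        exact (kill EA1 subEA1 soEA1 siEA1 v hvV hvu hvr).2 ⟨h1', h2'⟩
  have stepA2 : ∀ M', Net.CleanStep (⟨N.verts.erase r, EA2, N.lab⟩ : Net X) M' →
      M' = (⟨(N.verts.erase r).erase u₀, EB2, N.lab⟩ : Net X) := by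
    intro M' hstep
    cases hstep with
    | delNode v hv h0 hlab =>
      exfalso
      obtain ⟨hvr, hvV⟩ := Finset.mem_erase.mp (hv : v ∈ N.verts.erase r)
      have h0' : (EA2.filter (fun e => e.1 = v)).card = 0 := h0
      by_cases hvu : v = u₀
      · rw [hvu, hEA2outu] at h0'; simp at h0'
      · exact (kill EA2 subEA2 soEA2 siEA2 v hvV hvu hvr).1 hlab h0'
    | suppress a v b h1 h2 hu hw2 =>
      have h1' : (EA2.filter (fun e => e.2 = v)).card = 1 := h1
      have h2' : (EA2.filter (fun e => e.1 = v)).card = 1 := h2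
      have huE : (a, v) ∈ EA2 := hu
      have hwE2 : (v, b) ∈ EA2 := hw2
      have hvr : v ≠ r := by
        rcases (hmemEA2 a v).mp huE with hh | hh
        · rw [show v = c from congrArg Prod.snd hh]; exact hcr
        · exact hh.2.2
      by_cases hvu : v = u₀
      · rw [hvu] at huE hwE2
        have ha : a = pu := by
          rcases (hmemEA2 a u₀).mp huE with hh | hh
          · exact absurd (congrArg Prod.snd hh) hcu.symm
          · exact hin_u'' a hh.1
        have hb : b = w := by
          rcases (hmemEA2 u₀ b).mp hwE2 with hh | hh
          · exact absurd (congrArg Prod.fst hh) hpne.symm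
          · rcases hout_u'' b hh.1 with h3 | h3
            · exact absurd h3 hh.2.2
            · exact h3
        rw [hvu, ha, hb]
      · exfalso
        have hvV : v ∈ N.verts := by
          rcases (hmemEA2 a v).mp huE with hh | hh
          · rw [show v = c from congrArg Prod.snd hh]; exact hcV
          · exact (hends _ hh.1).2
        exact (kill EA2 subEA2 soEA2 siEA2 v hvV hvu hvr).2 ⟨h1', h2'⟩
  have stepB : ∀ M', ¬ Net.CleanStep (⟨(N.verts.erase u₀).erase r, EB, N.lab⟩ : Net X) M' := by
    intro M' hstep
    cases hstep with
    | delNode v hv h0 hlab =>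
      obtain ⟨hvr, hv2⟩ := Finset.mem_erase.mp (hv : v ∈ (N.verts.erase u₀).erase r)
      obtain ⟨hvu, hvV⟩ := Finset.mem_erase.mp hv2
      have h0' : (EB.filter (fun e => e.1 = v)).card = 0 := h0
      exact (kill EB subEB soEB siEB v hvV hvu hvr).1 hlab h0'
    | suppress a v b h1 h2 hu hw2 =>
      have h1' : (EB.filter (fun e => e.2 = v)).card = 1 := h1
      have h2' : (EB.filter (fun e => e.1 = v)).card = 1 := h2
      have huE : (a, v) ∈ EB := hu
      have hvu : v ≠ u₀ := by
        rcases (hmemEB a v).mp huE with hh | hh | hh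
        · rw [show v = c from congrArg Prod.snd hh]; exact hcu
        · rw [show v = w from congrArg Prod.snd hh]; exact hwu
        · exact hh.2.2.1
      have hvr : v ≠ r := by
        rcases (hmemEB a v).mp huE with hh | hh | hh
        · rw [show v = c from congrArg Prod.snd hh]; exact hcr
        · rw [show v = w from congrArg Prod.snd hh]; exact hwr
        · exact hh.2.2.2.2
      have hvV : v ∈ N.verts := by
        rcases (hmemEB a v).mp huE with hh | hh | hh
        · rw [show v = c from congrArg Prod.snd hh]; exact hcV
        · rw [show v = w from congrArg Prod.snd hh]; exact hwV
        · exact (hends _ hh.1).2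
      exact (kill EB subEB soEB siEB v hvV hvu hvr).2 ⟨h1', h2'⟩
  -- assemble
  intro M hM
  obtain ⟨hrtg, hnorm⟩ := hM
  have hfinal : M = (⟨(N.verts.erase u₀).erase r, EB, N.lab⟩ : Net X) := by
    rcases hrtg.cases_head with heq | ⟨C, hC, hr2⟩
    · exact absurd (heq ▸ hstep1) (hnorm _)
    rcases stepN' C hC with rfl | rfl
    · rcases hr2.cases_head with heq | ⟨D, hD, hr3⟩
      · exact absurd (heq ▸ hstep2) (hnorm _)
      have hD' := stepA1 D hD
      subst hD'
      rcases hr3.cases_head with heq | ⟨Z, hZ, -⟩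
      · exact heq.symm
      · exact absurd hZ (stepB Z)
    · rcases hr2.cases_head with heq | ⟨D, hD, hr3⟩
      · exact absurd (heq ▸ hstep2') (hnorm _)
      have hD' := stepA2 D hD
      subst hD'
      rw [hB2B] at hr3
      rcases hr3.cases_head with heq | ⟨Z, hZ, -⟩
      · exact heq.symm
      · exact absurd hZ (stepB Z)
  subst hfinal
  constructor
  · show ((N.verts.erase u₀).erase r).card + 2 = N.verts.card
    have h1 := Finset.card_erase_add_one hu₀V
    have h2 := Finset.card_erase_add_one
      (Finset.mem_erase.mpr ⟨(fun hh => hur hh.symm), hrV⟩ : r ∈ N.verts.erase u₀)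
    omega
  · exact hcEBtot
end
end

section
/- If a binary phylogenetic network N on X displays a binary phylogenetic network N' on X, then N' can be obtained from N by deleting, for each reticulation of N, at most one of its two incoming reticulation edges, and subsequently cleaning up. -/
open scoped Classical
noncomputable section

/-!
Pull the displayed subdivision `M` of `N'` back to an embedding of `M` into `N`. Subdividing the
root edge of `M` once for every edge on a path from the root of `N` down to the image of the root
of `N'`, we may assume that the root is sent to the root. Now delete every edge of `N` that enters
the image without being the image of an edge of `M`. Its head is not the root, so it also
receives an image edge: it is a reticulation, and only one of its two incoming edges is deleted.
Afterwards the nodes that still reach a leaf are exactly the image, since a path from outside into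
the image would have to use a deleted edge; so this live part is a copy of `M`. Cleaning up deletes
dead nodes, which leaves the live part alone, and suppresses indegree-1 outdegree-1 nodes, which
on the live part undoes a subdivision. So the live part stays isomorphic to a subdivision of `N'`.
When no clean-up step applies, every node is live and none can be suppressed, so that subdivision
is `N'` itself.
-/

lemma Finset.card_filter_insert_insert_erase {α : Type} [DecidableEq α] (p : α → Prop)
    [DecidablePred p] {s : Finset α} {a b c : α} (ha : a ∉ s) (hb : b ∉ s) (hab : a ≠ b)
    (hc : c ∈ s) :
    ((insert a (insert b (s.erase c))).filter p).card + (if p c then 1 else 0) =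
      (s.filter p).card + (if p a then 1 else 0) + (if p b then 1 else 0) := by
  have hce : ((s.filter p).erase c).card + (if p c then 1 else 0) = (s.filter p).card := by
    split_ifs with h
    · exact Finset.card_erase_add_one (Finset.mem_filter.2 ⟨hc, h⟩)
    · rw [Finset.erase_eq_of_notMem (by simp [h])]; rfl
  rw [Finset.filter_insert, Finset.filter_insert, Finset.filter_erase]
  split_ifs at hce ⊢ <;> simp_all [Finset.card_insert_of_notMem]

namespace Net

variable {X : Type}

def Closed (P : Net X) : Prop := ∀ e ∈ P.edges, e.1 ∈ P.verts ∧ e.2 ∈ P.verts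

def Acyclic (P : Net X) : Prop := ∀ u v, P.Edge u v → ¬ P.Reaches v u

section Basic

variable {P Q : Net X} {u v w x : ℕ}

lemma Edge.reaches (h : P.Edge u v) : P.Reaches u v := Relation.ReflTransGen.single h

lemma Acyclic.ne (hA : P.Acyclic) (h : P.Edge u v) : u ≠ v := by
  rintro rfl; exact hA u u h Relation.ReflTransGen.refl

lemma Acyclic.mono (hA : P.Acyclic) (h : ∀ a b, Q.Edge a b → P.Edge a b) : Q.Acyclic :=
  fun a b e r => hA a b (h _ _ e) (Relation.ReflTransGen.mono h _ _ r)

lemma indeg_pos_iff : 0 < P.indeg v ↔ ∃ u, P.Edge u v := by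
  simp [indeg, Finset.card_pos, Finset.Nonempty, Edge]

lemma outdeg_pos_iff : 0 < P.outdeg u ↔ ∃ v, P.Edge u v := by
  simp [outdeg, Finset.card_pos, Finset.Nonempty, Edge]

lemma eq_of_edge_of_indeg_le_one (h : P.indeg v ≤ 1) (hu : P.Edge u v) (hw : P.Edge w v) :
    u = w :=
  congrArg Prod.fst <| Finset.card_le_one.1 h (u, v) (Finset.mem_filter.2 ⟨hu, rfl⟩)
    (w, v) (Finset.mem_filter.2 ⟨hw, rfl⟩)

lemma eq_of_edge_of_outdeg_le_one (h : P.outdeg u ≤ 1) (hv : P.Edge u v) (hw : P.Edge u w) :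
    v = w :=
  congrArg Prod.snd <| Finset.card_le_one.1 h (u, v) (Finset.mem_filter.2 ⟨hv, rfl⟩)
    (u, w) (Finset.mem_filter.2 ⟨hw, rfl⟩)

lemma outdeg_mono (h : Q.edges ⊆ P.edges) (x : ℕ) : Q.outdeg x ≤ P.outdeg x :=
  Finset.card_le_card (Finset.filter_subset_filter _ h)

lemma ext {A B : Net X} (h1 : A.verts = B.verts) (h2 : A.edges = B.edges)
    (h3 : A.lab = B.lab) : A = B := by
  cases A; cases B; simp_all

lemma Closed.ne_of_edge_of_notMem (hC : P.Closed) (hw : w ∉ P.verts) {a b : ℕ}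
    (h : P.Edge a b) : a ≠ w ∧ b ≠ w :=
  ⟨fun ha => hw (ha ▸ (hC _ h).1), fun hb => hw (hb ▸ (hC _ h).2)⟩

lemma Closed.indeg_eq_zero_of_notMem (hC : P.Closed) (hw : w ∉ P.verts) : P.indeg w = 0 :=
  Finset.card_eq_zero.2 <| Finset.filter_eq_empty_iff.2 fun e he h => hw (h ▸ (hC e he).2)

lemma Closed.outdeg_eq_zero_of_notMem (hC : P.Closed) (hw : w ∉ P.verts) : P.outdeg w = 0 :=
  Finset.card_eq_zero.2 <| Finset.filter_eq_empty_iff.2 fun e he h => hw (h ▸ (hC e he).1)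

lemma two_le_indeg {a b v : ℕ} (ha : P.Edge a v) (hb : P.Edge b v) (hab : a ≠ b) :
    2 ≤ P.indeg v := by
  have : ({(a, v), (b, v)} : Finset (ℕ × ℕ)) ⊆ P.edges.filter (·.2 = v) := by
    simp only [Finset.insert_subset_iff, Finset.singleton_subset_iff, Finset.mem_filter, and_true]
    exact ⟨ha, hb⟩
  have := Finset.card_le_card this
  rwa [Finset.card_pair (by simpa using hab)] at this

lemma eq_of_indeg_le_two {a b c v : ℕ} (h : P.indeg v ≤ 2) (ha : P.Edge a v)
    (hb : P.Edge b v) (hc : P.Edge c v) (hab : a ≠ b) (hac : a ≠ c) : b = c := by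
  by_contra hbc
  have : ({(a, v), (b, v), (c, v)} : Finset (ℕ × ℕ)) ⊆ P.edges.filter (·.2 = v) := by
    simp only [Finset.insert_subset_iff, Finset.singleton_subset_iff, Finset.mem_filter, and_true]
    exact ⟨ha, hb, hc⟩
  have := Finset.card_le_card this
  rw [Finset.card_insert_of_notMem (by simp [hab, hac]), Finset.card_pair (by simpa using hbc)]
    at this
  exact absurd (this.trans h) (by decide)

lemma Reaches.exists_edge_into {T : Finset ℕ} {x l : ℕ} (hr : P.Reaches x l)
    (hl : l ∈ T) (hx : x ∉ T) : ∃ c d, c ∉ T ∧ d ∈ T ∧ P.Edge c d := by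
  induction hr using Relation.ReflTransGen.head_induction_on with
  | refl => exact absurd hl hx
  | @head a c hac _ ih =>
    by_cases hc : c ∈ T
    exacts [⟨_, c, hx, hc, hac⟩, ih hc]

lemma Reaches.of_forall_edge_reaches {l : ℕ} (hr : P.Reaches x l)
    (h : ∀ a b, P.Edge a b → P.Reaches b l → Q.Edge a b) : Q.Reaches x l := by
  induction hr using Relation.ReflTransGen.head_induction_on with
  | refl => exact .refl
  | head hac hcl ih => exact .head (h _ _ hac hcl) ih

lemma deleteNode_edge_iff {a b : ℕ} :
    (P.deleteNode v).Edge a b ↔ P.Edge a b ∧ a ≠ v ∧ b ≠ v :=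
  Finset.mem_filter

lemma Closed.deleteNode (hC : P.Closed) (v : ℕ) : (P.deleteNode v).Closed :=
  fun e he => by
    obtain ⟨he, h1, h2⟩ := Finset.mem_filter.1 he
    exact ⟨Finset.mem_erase.2 ⟨h1, (hC e he).1⟩, Finset.mem_erase.2 ⟨h2, (hC e he).2⟩⟩

end Basic

section Rank

variable {P : Net X}

def ancestors (P : Net X) (v : ℕ) : Finset ℕ := P.verts.filter (P.Reaches · v)

def descendants (P : Net X) (v : ℕ) : Finset ℕ := P.verts.filter (P.Reaches v ·)

lemma card_ancestors_lt (hA : P.Acyclic) {u v : ℕ} (hv : v ∈ P.verts) (e : P.Edge u v) :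
    (P.ancestors u).card < (P.ancestors v).card :=
  Finset.card_lt_card <| Finset.ssubset_iff_of_subset
    (fun x hx => by
      simp only [ancestors, Finset.mem_filter] at hx ⊢; exact ⟨hx.1, hx.2.tail e⟩) |>.2
    ⟨v, Finset.mem_filter.2 ⟨hv, .refl⟩, fun h => hA u v e (Finset.mem_filter.1 h).2⟩

lemma card_descendants_lt (hA : P.Acyclic) {u v : ℕ} (hu : u ∈ P.verts) (e : P.Edge u v) :
    (P.descendants v).card < (P.descendants u).card :=
  Finset.card_lt_card <| Finset.ssubset_iff_of_subset
    (fun x hx => by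
      simp only [descendants, Finset.mem_filter] at hx ⊢
      exact ⟨hx.1, e.reaches.trans hx.2⟩) |>.2
    ⟨u, Finset.mem_filter.2 ⟨hu, .refl⟩, fun h => hA u v e (Finset.mem_filter.1 h).2⟩

lemma acyclic_of_rank {h : ℕ → ℕ} (hh : ∀ a b, P.Edge a b → h a < h b) : P.Acyclic := by
  have mono : ∀ {x y}, P.Reaches x y → h x ≤ h y := fun hr => by
    induction hr with
    | refl => rfl
    | tail _ e ih => exact ih.trans (hh _ _ e).le
  exact fun a b hab hba => absurd (hh a b hab) (not_lt.2 (mono hba))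

lemma Acyclic.exists_rank (hC : P.Closed) (hA : P.Acyclic) :
    ∃ h : ℕ → ℕ, ∀ a b, P.Edge a b → h a < h b :=
  ⟨fun x => (P.ancestors x).card, fun _ _ e => card_ancestors_lt hA (hC _ e).2 e⟩

variable (hC : P.Closed) (hA : P.Acyclic)
include hC hA

lemma exists_reaches_outdeg_eq_zero {v : ℕ} (hv : v ∈ P.verts) :
    ∃ l ∈ P.verts, P.outdeg l = 0 ∧ P.Reaches v l := by
  obtain ⟨l, hl, hmin⟩ := (P.descendants v).exists_min_image (fun x => (P.descendants x).card)
    ⟨v, Finset.mem_filter.2 ⟨hv, .refl⟩⟩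
  obtain ⟨hlP, hvl⟩ := Finset.mem_filter.1 hl
  refine ⟨l, hlP, Nat.eq_zero_of_not_pos fun hpos => ?_, hvl⟩
  obtain ⟨c, hc⟩ := outdeg_pos_iff.1 hpos
  exact (card_descendants_lt hA hlP hc).not_ge
    (hmin c (Finset.mem_filter.2 ⟨(hC _ hc).2, hvl.tail hc⟩))

lemma reaches_of_unique_source {r v : ℕ} (hr : ∀ x ∈ P.verts, P.indeg x = 0 → x = r)
    (hv : v ∈ P.verts) : P.Reaches r v := by
  obtain ⟨s, hs, hmin⟩ := (P.ancestors v).exists_min_image (fun x => (P.ancestors x).card)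
    ⟨v, Finset.mem_filter.2 ⟨hv, .refl⟩⟩
  obtain ⟨hsP, hsv⟩ := Finset.mem_filter.1 hs
  suffices P.indeg s = 0 from hr s hsP this ▸ hsv
  refine Nat.eq_zero_of_not_pos fun hpos => ?_
  obtain ⟨c, hc⟩ := indeg_pos_iff.1 hpos
  exact (card_ancestors_lt hA hsP hc).not_ge
    (hmin c (Finset.mem_filter.2 ⟨(hC _ hc).1, hc.reaches.trans hsv⟩))

end Rank

section Network

variable {N : Net X} (hN : N.IsNetwork)
include hN

lemma IsNetwork.closed : N.Closed := hN.1

lemma IsNetwork.acyclic : N.Acyclic := hN.2.1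

lemma IsNetwork.existsUnique_root : ∃! r, N.IsRoot r := hN.2.2.1

lemma IsNetwork.node_cases {v : ℕ} (hv : v ∈ N.verts) :
    N.IsRoot v ∨ N.IsLeaf v ∨ N.IsTreeNode v ∨ N.IsRetic v :=
  hN.2.2.2.1 v hv

lemma IsNetwork.exists_lab_iff (v : ℕ) : (∃ x, N.lab v = some x) ↔ N.IsLeaf v :=
  hN.2.2.2.2.1 v

lemma IsNetwork.existsUnique_lab (x : X) : ∃! v, N.lab v = some x := hN.2.2.2.2.2 x

lemma IsNetwork.lab_eq_none_of_outdeg_pos {v : ℕ} (hv : 0 < N.outdeg v) : N.lab v = none :=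
  Option.eq_none_iff_forall_ne_some.2 fun x hx => by
    have := ((hN.exists_lab_iff v).1 ⟨x, hx⟩).2.2; omega

lemma IsNetwork.lab_eq_none_of_notMem {v : ℕ} (hv : v ∉ N.verts) : N.lab v = none :=
  Option.eq_none_iff_forall_ne_some.2 fun x hx => hv ((hN.exists_lab_iff v).1 ⟨x, hx⟩).1

lemma IsNetwork.eq_of_lab_eq {v w : ℕ} {x : X} (hv : N.lab v = some x) (hw : N.lab w = some x) :
    v = w :=
  (hN.existsUnique_lab x).unique hv hw

lemma IsNetwork.isRoot_of_indeg_eq_zero {v : ℕ} (hv : v ∈ N.verts) (h0 : N.indeg v = 0) :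
    N.IsRoot v := by
  rcases hN.node_cases hv with h | ⟨-, _, _⟩ | ⟨-, _, _⟩ | ⟨-, _, _⟩
  exacts [h, by omega, by omega, by omega]

lemma IsNetwork.isRetic_of_two_le_indeg {v : ℕ} (hv : v ∈ N.verts) (h2 : 2 ≤ N.indeg v) :
    N.IsRetic v := by
  rcases hN.node_cases hv with ⟨-, _, _⟩ | ⟨-, _, _⟩ | ⟨-, _, _⟩ | h
  exacts [by omega, by omega, by omega, h]

lemma IsNetwork.not_indeg_eq_one_and_outdeg_eq_one {x : ℕ}
    (hx : x ∈ N.verts) : ¬(N.indeg x = 1 ∧ N.outdeg x = 1) := by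
  rintro ⟨h1, h2⟩
  rcases hN.node_cases hx with ⟨-, _, _⟩ | ⟨-, _, _⟩ | ⟨-, _, _⟩ | ⟨-, _, _⟩ <;>
    omega

end Network

/-! ### Subdivisions -/

def subdivNet (M : Net X) (u v w : ℕ) : Net X :=
  ⟨insert w M.verts, insert (u, w) (insert (w, v) (M.edges.erase (u, v))), M.lab⟩

def suppNet (M : Net X) (u v w : ℕ) : Net X :=
  ⟨M.verts.erase v, insert (u, w) (M.edges.filter fun e => e.1 ≠ v ∧ e.2 ≠ v), M.lab⟩

lemma SubdivStep.exists_eq {M M₂ : Net X} (h : SubdivStep M M₂) :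
    ∃ u v w, M.Edge u v ∧ w ∉ M.verts ∧ M₂ = M.subdivNet u v w := by
  cases h with
  | mk u v w he hw => exact ⟨u, v, w, he, hw, rfl⟩

-- This is what lets suppressing a vertex commute with subdividing an edge: no edges merge.
def NoShortcut (M : Net X) : Prop :=
  ∀ p q r, M.Edge p q → M.Edge q r → M.indeg q = 1 → M.outdeg q = 1 → ¬ M.Edge p r

section Subdiv

variable {M : Net X} {u v w : ℕ}

lemma subdivNet_edge_iff {a b : ℕ} :
    (M.subdivNet u v w).Edge a b ↔
      (a = u ∧ b = w) ∨ (a = w ∧ b = v) ∨ (M.Edge a b ∧ ¬(a = u ∧ b = v)) := by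
  simp only [Edge, subdivNet, Finset.mem_insert, Finset.mem_erase, ne_eq, Prod.mk.injEq]
  tauto

lemma suppNet_edge_iff {a b : ℕ} :
    (M.suppNet u v w).Edge a b ↔ (a = u ∧ b = w) ∨ (M.Edge a b ∧ a ≠ v ∧ b ≠ v) := by
  simp only [Edge, suppNet, Finset.mem_insert, Finset.mem_filter, Prod.mk.injEq]

lemma Closed.subdivNet (hC : M.Closed) (he : M.Edge u v) : (M.subdivNet u v w).Closed := by
  rintro ⟨a, b⟩ hab
  rcases subdivNet_edge_iff.1 hab with ⟨rfl, rfl⟩ | ⟨rfl, rfl⟩ | ⟨hab, -⟩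
  · simp [subdivNet, (hC _ he).1]
  · simp [subdivNet, (hC _ he).2]
  · exact ⟨Finset.mem_insert_of_mem (hC _ hab).1, Finset.mem_insert_of_mem (hC _ hab).2⟩

variable (hC : M.Closed) (he : M.Edge u v) (hw : w ∉ M.verts)
include hC he hw

lemma subdivNet_indeg (x : ℕ) :
    (M.subdivNet u v w).indeg x = if x = w then 1 else M.indeg x := by
  obtain ⟨huw, hvw⟩ := hC.ne_of_edge_of_notMem hw he
  have key := Finset.card_filter_insert_insert_erase (fun e : ℕ × ℕ => e.2 = x) (b := (w, v))
    (fun h => (hC.ne_of_edge_of_notMem hw h).2 rfl)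
    (fun h => (hC.ne_of_edge_of_notMem hw h).1 rfl) (fun h => huw (congrArg Prod.fst h)) he
  have h0 := hC.indeg_eq_zero_of_notMem hw
  simp only [indeg, subdivNet] at h0 ⊢
  split_ifs at key ⊢ <;> subst_vars <;> omega

lemma subdivNet_outdeg (x : ℕ) :
    (M.subdivNet u v w).outdeg x = if x = w then 1 else M.outdeg x := by
  obtain ⟨huw, hvw⟩ := hC.ne_of_edge_of_notMem hw he
  have key := Finset.card_filter_insert_insert_erase (fun e : ℕ × ℕ => e.1 = x) (b := (w, v))
    (fun h => (hC.ne_of_edge_of_notMem hw h).2 rfl)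
    (fun h => (hC.ne_of_edge_of_notMem hw h).1 rfl) (fun h => huw (congrArg Prod.fst h)) he
  have h0 := hC.outdeg_eq_zero_of_notMem hw
  simp only [outdeg, subdivNet] at h0 ⊢
  split_ifs at key ⊢ <;> subst_vars <;> omega

lemma NoShortcut.subdivNet (hns : M.NoShortcut) {h : ℕ → ℕ}
    (hh : ∀ a b, M.Edge a b → h a < h b) : (M.subdivNet u v w).NoShortcut := by
  have fresh : ∀ {a b}, M.Edge a b → a ≠ w ∧ b ≠ w := hC.ne_of_edge_of_notMem hw
  obtain ⟨huw, hvw⟩ := fresh he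
  have huv := hh u v he
  have cases : ∀ {a b}, (M.subdivNet u v w).Edge a b →
      (a = u ∧ b = w) ∨ (a = w ∧ b = v) ∨
        (M.Edge a b ∧ a ≠ w ∧ b ≠ w ∧ h a < h b ∧ ¬(a = u ∧ b = v)) := fun hab => by
    rcases subdivNet_edge_iff.1 hab with h' | h' | ⟨h', h''⟩
    exacts [.inl h', .inr (.inl h'),
      .inr (.inr ⟨h', (fresh h').1, (fresh h').2, hh _ _ h', h''⟩)]
  intro p q r hpq hqr h1 h2 hpr
  rw [subdivNet_indeg hC he hw] at h1
  rw [subdivNet_outdeg hC he hw] at h2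
  have := hns p q r
  rcases cases hpq with ⟨h3, h4⟩ | ⟨h3, h4⟩ | ⟨hpq', h3, h4, h5, -⟩ <;>
  rcases cases hqr with ⟨h6, h7⟩ | ⟨h6, h7⟩ | ⟨hqr', h6, h7, h8, -⟩ <;>
  rcases cases hpr with ⟨h9, h10⟩ | ⟨h9, h10⟩ | ⟨hpr', h9, h10, h11, h12⟩ <;>
  subst_vars <;> simp_all

end Subdiv

structure SubdivInvariant (N' M : Net X) : Prop where
  closed : M.Closed
  -- a rank function rather than acyclicity, since it extends to a subdivided edge by interpolation
  rank : ∃ h : ℕ → ℕ, ∀ a b, M.Edge a b → h a < h b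
  no_shortcut : M.NoShortcut
  verts_subset : N'.verts ⊆ M.verts
  deg_old : ∀ x ∈ N'.verts, M.indeg x = N'.indeg x ∧ M.outdeg x = N'.outdeg x
  deg_new : ∀ x ∈ M.verts, x ∉ N'.verts → M.indeg x = 1 ∧ M.outdeg x = 1
  lab_eq : M.lab = N'.lab

lemma SubdivInvariant.acyclic {N' M : Net X} (hg : SubdivInvariant N' M) : M.Acyclic :=
  acyclic_of_rank hg.rank.choose_spec

lemma SubdivInvariant.refl {N' : Net X} (hN' : N'.IsNetwork) : SubdivInvariant N' N' where
  closed := hN'.closed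
  rank := Acyclic.exists_rank hN'.closed hN'.acyclic
  no_shortcut _ _ _ h _ h1 h2 :=
    absurd ⟨h1, h2⟩ (hN'.not_indeg_eq_one_and_outdeg_eq_one (hN'.closed _ h).2)
  verts_subset := subset_rfl
  deg_old _ _ := ⟨rfl, rfl⟩
  deg_new _ hx hx' := absurd hx hx'
  lab_eq := rfl

lemma SubdivInvariant.subdivStep {N' M M₂ : Net X} (hg : SubdivInvariant N' M)
    (hs : SubdivStep M M₂) : SubdivInvariant N' M₂ := by
  obtain ⟨u, v, w, he, hw, rfl⟩ := hs.exists_eq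
  have hC := hg.closed
  have fresh : ∀ {a b}, M.Edge a b → a ≠ w ∧ b ≠ w := hC.ne_of_edge_of_notMem hw
  obtain ⟨huw, hvw⟩ := fresh he
  have din := subdivNet_indeg hC he hw
  have dout := subdivNet_outdeg hC he hw
  obtain ⟨h, hh⟩ := hg.rank
  have huv := hh u v he
  refine ⟨hC.subdivNet he, ⟨fun x => if x = w then 2 * h u + 1 else 2 * h x, ?_⟩,
    hg.no_shortcut.subdivNet hC he hw hh, ?_, ?_, ?_, hg.lab_eq⟩
  · intro a b hab
    rcases subdivNet_edge_iff.1 hab with ⟨rfl, rfl⟩ | ⟨rfl, rfl⟩ | ⟨hab', -⟩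
    · simp [huw]
    · simp [hvw]; omega
    · simp [fresh hab', hh _ _ hab']
  · exact hg.verts_subset.trans (Finset.subset_insert _ _)
  · intro x hx
    have hxw : x ≠ w := fun h => hw (h ▸ hg.verts_subset hx)
    simpa [din, dout, hxw] using hg.deg_old x hx
  · intro x hx hx'
    by_cases hxw : x = w
    · simp [din, dout, hxw]
    · simpa [din, dout, hxw] using hg.deg_new x ((Finset.mem_insert.1 hx).resolve_left hxw) hx'

section Commute

variable {M : Net X} {a b z : ℕ} (hC : M.Closed) (hz : z ∉ M.verts)
include hC hz

lemma suppNet_subdivNet_self (hab : M.Edge a b) : (M.subdivNet a b z).suppNet a z b = M := by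
  obtain ⟨haz, hbz⟩ := hC.ne_of_edge_of_notMem hz hab
  refine ext (Finset.erase_insert hz) (Finset.ext fun ⟨x, y⟩ => ?_) rfl
  have := @Closed.ne_of_edge_of_notMem _ _ _ hC hz x y
  simp only [suppNet, subdivNet, Edge, Finset.mem_insert, Finset.mem_filter, Finset.mem_erase,
    Prod.mk.injEq] at this hab ⊢
  grind

lemma suppNet_subdivNet_comm {p q s : ℕ} (hqa : q ≠ a) (hqb : q ≠ b) (hqz : q ≠ z)
    (hps : (p, s) ≠ (a, b)) :
    (M.subdivNet a b z).suppNet p q s = (M.suppNet p q s).subdivNet a b z := by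
  refine ext (Finset.erase_insert_of_ne (Ne.symm hqz)) (Finset.ext fun ⟨x, y⟩ => ?_) rfl
  have := @Closed.ne_of_edge_of_notMem _ _ _ hC hz x y
  simp only [suppNet, subdivNet, Edge, Finset.mem_insert, Finset.mem_filter, Finset.mem_erase,
    Prod.mk.injEq] at this hps ⊢
  grind

lemma suppNet_subdivNet_head {s : ℕ} (hab : M.Edge a b) (hbs : M.Edge b s) (has : ¬ M.Edge a s) :
    (M.subdivNet a b z).suppNet z b s = (M.suppNet a b s).subdivNet a s z := by
  obtain ⟨haz, hbz⟩ := hC.ne_of_edge_of_notMem hz hab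
  refine ext (Finset.erase_insert_of_ne (Ne.symm hbz)) (Finset.ext fun ⟨x, y⟩ => ?_) rfl
  have := @Closed.ne_of_edge_of_notMem _ _ _ hC hz x y
  simp only [suppNet, subdivNet, Edge, Finset.mem_insert, Finset.mem_filter, Finset.mem_erase,
    Prod.mk.injEq] at this hab hbs has ⊢
  grind

lemma suppNet_subdivNet_tail {p : ℕ} (hab : M.Edge a b) (hpa : M.Edge p a) (hpb : ¬ M.Edge p b) :
    (M.subdivNet a b z).suppNet p a z = (M.suppNet p a b).subdivNet p b z := by
  obtain ⟨haz, hbz⟩ := hC.ne_of_edge_of_notMem hz hab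
  refine ext (Finset.erase_insert_of_ne (Ne.symm haz)) (Finset.ext fun ⟨x, y⟩ => ?_) rfl
  have := @Closed.ne_of_edge_of_notMem _ _ _ hC hz x y
  simp only [suppNet, subdivNet, Edge, Finset.mem_insert, Finset.mem_filter, Finset.mem_erase,
    Prod.mk.injEq] at this hab hpa hpb ⊢
  grind

lemma suppNet_subdivNet_eq_self_or_comm (hA : M.Acyclic) (hns : M.NoShortcut) (hab : M.Edge a b)
    {p q s : ℕ} (h1 : (M.subdivNet a b z).indeg q = 1) (h2 : (M.subdivNet a b z).outdeg q = 1)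
    (hp : (M.subdivNet a b z).Edge p q) (hs : (M.subdivNet a b z).Edge q s) :
    (M.subdivNet a b z).suppNet p q s = M ∨
      ∃ p' s' x y, M.indeg q = 1 ∧ M.outdeg q = 1 ∧ M.Edge p' q ∧ M.Edge q s' ∧
        (M.suppNet p' q s').Edge x y ∧
        (M.subdivNet a b z).suppNet p q s = (M.suppNet p' q s').subdivNet x y z := by
  have fresh : ∀ {x y}, M.Edge x y → x ≠ z ∧ y ≠ z := hC.ne_of_edge_of_notMem hz
  obtain ⟨haz, hbz⟩ := fresh hab
  by_cases hqz : q = z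
  · subst hqz
    obtain rfl : p = a := by
      rcases subdivNet_edge_iff.1 hp with h | h | h
      exacts [h.1, absurd h.2.symm hbz, absurd rfl (fresh h.1).2]
    obtain rfl : s = b := by
      rcases subdivNet_edge_iff.1 hs with h | h | h
      exacts [absurd h.1.symm haz, h.2, absurd rfl (fresh h.1).1]
    exact .inl (suppNet_subdivNet_self hC hz hab)
  rw [subdivNet_indeg hC hab hz, if_neg hqz] at h1
  rw [subdivNet_outdeg hC hab hz, if_neg hqz] at h2
  refine .inr ?_
  rcases subdivNet_edge_iff.1 hp with ⟨-, h⟩ | ⟨rfl, rfl⟩ | ⟨hp', hnp⟩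
  · exact absurd h hqz
  · have hs' : M.Edge q s := by
      rcases subdivNet_edge_iff.1 hs with h | h | h
      exacts [absurd h.1.symm (hA.ne hab), absurd h.1 hqz, h.1]
    exact ⟨a, s, a, s, h1, h2, hab, hs', Finset.mem_insert_self _ _,
      suppNet_subdivNet_head hC hz hab hs' (hns _ _ _ hab hs' h1 h2)⟩
  rcases subdivNet_edge_iff.1 hs with ⟨rfl, rfl⟩ | ⟨h, -⟩ | ⟨hs', hns'⟩
  · exact ⟨p, b, p, b, h1, h2, hp', hab, Finset.mem_insert_self _ _,
      suppNet_subdivNet_tail hC hz hab hp' (hns _ _ _ hp' hab h1 h2)⟩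
  · exact absurd h hqz
  have hqa : q ≠ a := fun h => hns' ⟨h, eq_of_edge_of_outdeg_le_one h2.le hs' (h ▸ hab)⟩
  have hqb : q ≠ b := fun h => hnp ⟨eq_of_edge_of_indeg_le_one h1.le hp' (h ▸ hab), h⟩
  exact ⟨p, s, a, b, h1, h2, hp', hs',
    Finset.mem_insert_of_mem (Finset.mem_filter.2 ⟨hab, Ne.symm hqa, Ne.symm hqb⟩),
    suppNet_subdivNet_comm hC hz hqa hqb hqz
      fun h => hns _ _ _ hp' hs' h1 h2 (by rw [Edge, h]; exact hab)⟩

end Commute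

lemma Subdivision.invariant {N' M : Net X} (hN' : N'.IsNetwork) (h : Subdivision N' M) :
    SubdivInvariant N' M := by
  induction h with
  | refl => exact .refl hN'
  | tail _ hs ih => exact ih.subdivStep hs

lemma Subdivision.suppNet {N' M : Net X} (hN' : N'.IsNetwork) (h : Subdivision N' M)
    {p q s : ℕ} (h1 : M.indeg q = 1) (h2 : M.outdeg q = 1) (hp : M.Edge p q)
    (hs : M.Edge q s) : Subdivision N' (M.suppNet p q s) := by
  induction h generalizing p q s with
  | refl => exact absurd ⟨h1, h2⟩ (hN'.not_indeg_eq_one_and_outdeg_eq_one (hN'.closed _ hp).2)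
  | @tail M₁ _ hsub hstep ih =>
    obtain ⟨a, b, z, hab, hz, rfl⟩ := hstep.exists_eq
    have g₁ := Subdivision.invariant hN' hsub
    rcases suppNet_subdivNet_eq_self_or_comm g₁.closed hz g₁.acyclic g₁.no_shortcut hab
      h1 h2 hp hs with h | ⟨p', s', x, y, h1', h2', hp', hs', hxy, h⟩
    · rwa [h]
    · rw [h]
      exact (ih h1' h2' hp' hs').tail (.mk _ x y z hxy fun h => hz (Finset.mem_of_mem_erase h))

section SubdivOfNetwork

variable {N' M : Net X} (hN' : N'.IsNetwork) (hg : SubdivInvariant N' M)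
include hN' hg

lemma SubdivInvariant.eq_root_of_indeg_eq_zero {r x : ℕ} (hr : N'.IsRoot r) (hx : x ∈ M.verts)
    (h0 : M.indeg x = 0) : x = r := by
  by_cases hxN : x ∈ N'.verts
  · rw [(hg.deg_old x hxN).1] at h0
    exact (hN'.existsUnique_root).unique (hN'.isRoot_of_indeg_eq_zero hxN h0) hr
  · have := (hg.deg_new x hx hxN).1; omega

lemma SubdivInvariant.lab_ne_none_of_outdeg_eq_zero {x : ℕ} (hx : x ∈ M.verts)
    (h0 : M.outdeg x = 0) : M.lab x ≠ none := by
  by_cases hxN : x ∈ N'.verts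
  · rw [(hg.deg_old x hxN).2] at h0
    rcases hN'.node_cases hxN with ⟨-, _, _⟩ | h | ⟨-, _, _⟩ | ⟨-, _, _⟩
    · omega
    · obtain ⟨l, hl⟩ := (hN'.exists_lab_iff x).2 h
      rw [hg.lab_eq, hl]; exact Option.some_ne_none l
    all_goals omega
  · have := (hg.deg_new x hx hxN).2; omega

end SubdivOfNetwork

lemma Subdivision.eq_of_forall_not_deg_one_one {N' M : Net X} (hN' : N'.IsNetwork)
    (h : Subdivision N' M) (hno : ∀ x ∈ M.verts, ¬(M.indeg x = 1 ∧ M.outdeg x = 1)) :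
    M = N' := by
  rcases Relation.ReflTransGen.cases_tail h with rfl | ⟨M₁, h₁, hs⟩
  · rfl
  obtain ⟨u, v, w, -, hw, rfl⟩ := hs.exists_eq
  have hwM := Finset.mem_insert_self w M₁.verts
  exact (hno w hwM ((Subdivision.invariant hN' h).deg_new w hwM
    fun hw' => hw ((Subdivision.invariant hN' h₁).verts_subset hw'))).elim

def IsoWith (f : ℕ → ℕ) (A B : Net X) : Prop :=
  Set.BijOn f ↑A.verts ↑B.verts ∧
    (∀ u ∈ A.verts, ∀ v ∈ A.verts, (A.Edge u v ↔ B.Edge (f u) (f v))) ∧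
    ∀ v ∈ A.verts, A.lab v = B.lab (f v)

namespace IsoWith

variable {A B : Net X} {f : ℕ → ℕ}

lemma mem (hf : IsoWith f A B) {v : ℕ} (hv : v ∈ A.verts) : f v ∈ B.verts := hf.1.mapsTo hv

lemma inj (hf : IsoWith f A B) {u v : ℕ} (hu : u ∈ A.verts) (hv : v ∈ A.verts) :
    f u = f v ↔ u = v :=
  hf.1.injOn.eq_iff hu hv

lemma card_filter_edges (hf : IsoWith f A B) (hA : A.Closed) (hB : B.Closed)
    (p q : ℕ × ℕ → Prop) [DecidablePred p] [DecidablePred q]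
    (hpq : ∀ a ∈ A.verts, ∀ b ∈ A.verts, p (a, b) ↔ q (f a, f b)) :
    (A.edges.filter p).card = (B.edges.filter q).card := by
  refine Finset.card_nbij (Prod.map f f) ?_ ?_ ?_
  · rintro ⟨a, b⟩ hab
    obtain ⟨hab, hp⟩ := Finset.mem_filter.1 hab
    obtain ⟨ha, hb⟩ := hA _ hab
    exact Finset.mem_filter.2 ⟨(hf.2.1 a ha b hb).1 hab, (hpq a ha b hb).1 hp⟩
  · rintro ⟨a, b⟩ hab ⟨a', b'⟩ hab' h
    obtain ⟨ha, hb⟩ := hA _ (Finset.mem_filter.1 hab).1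
    obtain ⟨ha', hb'⟩ := hA _ (Finset.mem_filter.1 hab').1
    simp only [Prod.map, Prod.mk.injEq, hf.inj ha ha', hf.inj hb hb'] at h
    rw [h.1, h.2]
  · rintro ⟨c, d⟩ hcd
    obtain ⟨hcd, hq⟩ := Finset.mem_filter.1 hcd
    obtain ⟨a, ha, rfl⟩ := hf.1.surjOn (hB _ hcd).1
    obtain ⟨b, hb, rfl⟩ := hf.1.surjOn (hB _ hcd).2
    exact ⟨(a, b), Finset.mem_filter.2 ⟨(hf.2.1 a ha b hb).2 hcd, (hpq a ha b hb).2 hq⟩,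
      rfl⟩

lemma indeg_eq (hf : IsoWith f A B) (hA : A.Closed) (hB : B.Closed) {v : ℕ}
    (hv : v ∈ A.verts) : A.indeg v = B.indeg (f v) :=
  hf.card_filter_edges hA hB _ _ fun _ _ _ hb => (hf.inj hb hv).symm

lemma outdeg_eq (hf : IsoWith f A B) (hA : A.Closed) (hB : B.Closed) {v : ℕ}
    (hv : v ∈ A.verts) : A.outdeg v = B.outdeg (f v) :=
  hf.card_filter_edges hA hB _ _ fun _ ha _ _ => (hf.inj ha hv).symm

lemma suppNet (hf : IsoWith f A B) {u v w : ℕ} (hu : u ∈ A.verts) (hv : v ∈ A.verts)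
    (hw : w ∈ A.verts) : IsoWith f (A.suppNet u v w) (B.suppNet (f u) (f v) (f w)) := by
  have hne : ∀ {x}, x ∈ A.verts → (f x ≠ f v ↔ x ≠ v) := fun hx => (hf.inj hx hv).not
  refine ⟨⟨fun x hx => ?_, hf.1.injOn.mono fun x hx => (Finset.mem_erase.1 hx).2, ?_⟩,
    ?_, ?_⟩
  · obtain ⟨hxv, hx⟩ := Finset.mem_erase.1 hx
    exact Finset.mem_erase.2 ⟨(hne hx).2 hxv, hf.mem hx⟩
  · intro y hy
    obtain ⟨hyv, hy⟩ := Finset.mem_erase.1 hy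
    obtain ⟨x, hx, rfl⟩ := hf.1.surjOn hy
    exact ⟨x, Finset.mem_erase.2 ⟨(hne hx).1 hyv, hx⟩, rfl⟩
  · intro x hx y hy
    obtain ⟨hxv, hx⟩ := Finset.mem_erase.1 hx
    obtain ⟨hyv, hy⟩ := Finset.mem_erase.1 hy
    rw [suppNet_edge_iff, suppNet_edge_iff, hf.inj hx hu, hf.inj hy hw, ← hf.2.1 x hx y hy,
      hne hx, hne hy]
  · exact fun x hx => hf.2.2 x (Finset.mem_erase.1 hx).2

end IsoWith

lemma Iso.symm {A B : Net X} (h : A.Iso B) : B.Iso A := by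
  obtain ⟨f, hbij, he, hl⟩ := h
  have hinv : Set.InvOn (Function.invFunOn f A.verts) f A.verts B.verts :=
    ⟨hbij.injOn.leftInvOn_invFunOn, hbij.surjOn.rightInvOn_invFunOn⟩
  have hbij' := hbij.symm hinv.symm
  refine ⟨_, hbij', fun u hu v hv => ?_, fun v hv => ?_⟩
  · rw [he _ (hbij'.mapsTo hu) _ (hbij'.mapsTo hv), hinv.2 hu, hinv.2 hv]
  · rw [hl _ (hbij'.mapsTo hv), hinv.2 hv]

/-! ### The part that reaches a leaf -/

def IsLive (P : Net X) (v : ℕ) : Prop := ∃ l, (∃ x, P.lab l = some x) ∧ P.Reaches v l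

-- Filtering edges by their head suffices: the tail of an edge into a live node is live.
def liveNet (P : Net X) : Net X :=
  ⟨P.verts.filter P.IsLive, P.edges.filter (P.IsLive ·.2), P.lab⟩

section Live

variable {P Q : Net X} {u v w x : ℕ}

lemma IsLive.of_edge (he : P.Edge u v) (hv : P.IsLive v) : P.IsLive u :=
  let ⟨l, hl, hr⟩ := hv; ⟨l, hl, he.reaches.trans hr⟩

lemma IsLive.exists_edge (hv : P.IsLive v) (hlab : P.lab v = none) :
    ∃ c, P.Edge v c ∧ P.IsLive c := by
  obtain ⟨l, ⟨y, hy⟩, hr⟩ := hv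
  rcases Relation.ReflTransGen.cases_head hr with rfl | ⟨c, hc, hcl⟩
  · simp [hlab] at hy
  · exact ⟨c, hc, l, ⟨y, hy⟩, hcl⟩

lemma not_isLive_of_outdeg_eq_zero (hlab : P.lab v = none) (h0 : P.outdeg v = 0) :
    ¬ P.IsLive v := fun hv => by
  obtain ⟨c, hc, -⟩ := hv.exists_edge hlab
  exact (outdeg_pos_iff.2 ⟨c, hc⟩).ne' h0

lemma mem_liveNet_verts : x ∈ P.liveNet.verts ↔ x ∈ P.verts ∧ P.IsLive x :=
  Finset.mem_filter

lemma liveNet_edge_iff : P.liveNet.Edge u v ↔ P.Edge u v ∧ P.IsLive v :=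
  Finset.mem_filter

lemma Closed.liveNet (hC : P.Closed) : P.liveNet.Closed := fun e he => by
  obtain ⟨he, hl⟩ := Finset.mem_filter.1 he
  exact ⟨mem_liveNet_verts.2 ⟨(hC e he).1, hl.of_edge he⟩,
    mem_liveNet_verts.2 ⟨(hC e he).2, hl⟩⟩

lemma liveNet_congr (hlab : Q.lab = P.lab) (hlive : ∀ x, Q.IsLive x ↔ P.IsLive x)
    (hV : ∀ x, P.IsLive x → (x ∈ Q.verts ↔ x ∈ P.verts))
    (hE : ∀ a b, P.IsLive b → (Q.Edge a b ↔ P.Edge a b)) : Q.liveNet = P.liveNet := by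
  refine ext (Finset.ext fun x => ?_) (Finset.ext fun ⟨a, b⟩ => ?_) hlab
  · rw [mem_liveNet_verts, mem_liveNet_verts, hlive]
    exact ⟨fun h => ⟨(hV x h.2).1 h.1, h.2⟩, fun h => ⟨(hV x h.2).2 h.1, h.2⟩⟩
  · change Q.liveNet.Edge a b ↔ P.liveNet.Edge a b
    rw [liveNet_edge_iff, liveNet_edge_iff, hlive]
    exact ⟨fun h => ⟨(hE a b h.2).1 h.1, h.2⟩, fun h => ⟨(hE a b h.2).2 h.1, h.2⟩⟩

lemma liveNet_deleteNode (hdead : ¬ P.IsLive v) : (P.deleteNode v).liveNet = P.liveNet := by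
  have hne : ∀ {y}, P.IsLive y → y ≠ v := fun hy h => hdead (h ▸ hy)
  refine liveNet_congr rfl
    (fun x => ⟨fun ⟨l, hl, hr⟩ => ⟨l, hl, ?_⟩, fun ⟨l, hl, hr⟩ => ⟨l, hl, ?_⟩⟩)
    (fun x hx => by simp [deleteNode, hne hx]) fun a b hb => ?_
  · exact Relation.ReflTransGen.mono (fun _ _ h => (deleteNode_edge_iff.1 h).1) _ _ hr
  · exact hr.of_forall_edge_reaches fun a b hab hbl => deleteNode_edge_iff.2
      ⟨hab, hne (IsLive.of_edge hab ⟨l, hl, hbl⟩), hne ⟨l, hl, hbl⟩⟩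
  · exact ⟨fun h => (deleteNode_edge_iff.1 h).1,
      fun h => deleteNode_edge_iff.2 ⟨h, hne (hb.of_edge h), hne hb⟩⟩

lemma IsLive.of_outdeg_eq_one (hv : P.IsLive v) (hlab : P.lab v = none) (h2 : P.outdeg v = 1)
    (hw : P.Edge v w) : P.IsLive w := by
  obtain ⟨c, hc, hlc⟩ := hv.exists_edge hlab
  rwa [eq_of_edge_of_outdeg_le_one h2.le hc hw] at hlc

lemma liveNet_indeg (hv : P.IsLive v) : P.liveNet.indeg v = P.indeg v := by
  simp only [indeg, liveNet, Finset.filter_filter]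
  congr 1
  exact Finset.filter_congr fun e _ => ⟨And.right, fun h => ⟨h ▸ hv, h⟩⟩

lemma liveNet_outdeg (hv : P.IsLive v) (hlab : P.lab v = none) (h2 : P.outdeg v = 1)
    (hw : P.Edge v w) : P.liveNet.outdeg v = 1 :=
  le_antisymm (h2 ▸ outdeg_mono (Finset.filter_subset _ _) v) <|
    outdeg_pos_iff.2 ⟨w, liveNet_edge_iff.2 ⟨hw, hv.of_outdeg_eq_one hlab h2 hw⟩⟩

end Live

section Suppress

variable {P : Net X} {u v w : ℕ} (hu : P.Edge u v) (hw : P.Edge v w)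
include hu hw

lemma Reaches.of_suppNet {a b : ℕ} (hr : (P.suppNet u v w).Reaches a b) : P.Reaches a b := by
  refine Relation.ReflTransGen.lift' id (fun x y hxy => ?_) _ _ hr
  rcases suppNet_edge_iff.1 hxy with ⟨rfl, rfl⟩ | ⟨hxy, -⟩
  exacts [hu.reaches.trans hw.reaches, hxy.reaches]

lemma Acyclic.suppNet (hA : P.Acyclic) : (P.suppNet u v w).Acyclic := fun a b hab hba => by
  have hPba := hba.of_suppNet hu hw
  rcases suppNet_edge_iff.1 hab with ⟨rfl, rfl⟩ | ⟨hab, -⟩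
  exacts [hA a v hu (hw.reaches.trans hPba), hA a b hab hPba]

lemma Closed.suppNet (hC : P.Closed) (hA : P.Acyclic) : (P.suppNet u v w).Closed := fun e he => by
  rcases Finset.mem_insert.1 he with rfl | he
  · exact ⟨Finset.mem_erase.2 ⟨hA.ne hu, (hC _ hu).1⟩,
      Finset.mem_erase.2 ⟨(hA.ne hw).symm, (hC _ hw).2⟩⟩
  · exact hC.deleteNode v e he

lemma IsLive.of_suppNet {x : ℕ} (hx : (P.suppNet u v w).IsLive x) : P.IsLive x :=
  let ⟨l, hl, hr⟩ := hx; ⟨l, hl, hr.of_suppNet hu hw⟩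

variable (hA : P.Acyclic) (h1 : P.indeg v = 1) (h2 : P.outdeg v = 1)
include hA h1 h2

lemma Reaches.suppNet {a b : ℕ} (hr : P.Reaches a b) (ha : a ≠ v) (hb : b ≠ v) :
    (P.suppNet u v w).Reaches a b := by
  let φ : ℕ → ℕ := fun y => if y = v then w else y
  have hwv : w ≠ v := (hA.ne hw).symm
  have key : ∀ x y, P.Edge x y → (P.suppNet u v w).Reaches (φ x) (φ y) := fun x y hxy => by
    by_cases hxv : x = v
    · obtain rfl : y = w := eq_of_edge_of_outdeg_le_one h2.le (hxv ▸ hxy) hw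
      simp only [φ, if_pos hxv, if_neg hwv]
      exact .refl
    by_cases hyv : y = v
    · obtain rfl : x = u := eq_of_edge_of_indeg_le_one h1.le (hyv ▸ hxy) hu
      simp only [φ, if_neg hxv, if_pos hyv]
      exact Edge.reaches (suppNet_edge_iff.2 (.inl ⟨rfl, rfl⟩))
    simp only [φ, if_neg hxv, if_neg hyv]
    exact Edge.reaches (suppNet_edge_iff.2 (.inr ⟨hxy, hxv, hyv⟩))
  have := Relation.ReflTransGen.lift' φ key _ _ hr
  simp only [Function.onFun, φ, if_neg ha, if_neg hb] at this
  exact this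

variable (hlab : ∀ y, 0 < P.outdeg y → P.lab y = none)
include hlab

lemma isLive_suppNet_iff {x : ℕ} (hx : x ≠ v) : (P.suppNet u v w).IsLive x ↔ P.IsLive x := by
  refine ⟨IsLive.of_suppNet hu hw,
    fun ⟨l, hl, hr⟩ => ⟨l, hl, hr.suppNet hu hw hA h1 h2 hx ?_⟩⟩
  intro hlv
  obtain ⟨y, hy⟩ := hl
  rw [hlv, hlab v (by omega)] at hy
  cases hy

lemma liveNet_suppNet_of_not_isLive (hdead : ¬ P.IsLive v) :
    (P.suppNet u v w).liveNet = P.liveNet := by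
  have hne : ∀ {y}, P.IsLive y → y ≠ v := fun hy h => hdead (h ▸ hy)
  refine liveNet_congr rfl (fun x => ⟨IsLive.of_suppNet hu hw, fun hx => ?_⟩)
    (fun x hx => by simp [suppNet, hne hx]) fun a b hb => ?_
  · exact (isLive_suppNet_iff hu hw hA h1 h2 hlab (hne hx)).2 hx
  rw [suppNet_edge_iff]
  refine ⟨?_, fun h => .inr ⟨h, hne (hb.of_edge h), hne hb⟩⟩
  rintro (⟨-, rfl⟩ | ⟨h, -⟩)
  exacts [absurd (hb.of_edge hw) hdead, h]

lemma liveNet_suppNet_of_isLive (hv : P.IsLive v) :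
    (P.suppNet u v w).liveNet = P.liveNet.suppNet u v w := by
  have hwl := hv.of_outdeg_eq_one (hlab v (by omega)) h2 hw
  have hwv : w ≠ v := (hA.ne hw).symm
  have hlive := fun {x} (hx : x ≠ v) => isLive_suppNet_iff hu hw hA h1 h2 hlab hx
  refine ext (Finset.ext fun x => ?_) (Finset.ext fun ⟨a, b⟩ => ?_) rfl
  · show x ∈ (P.suppNet u v w).liveNet.verts ↔ x ∈ P.liveNet.verts.erase v
    rw [mem_liveNet_verts, Finset.mem_erase, mem_liveNet_verts]
    by_cases hxv : x = v
    · simp [hxv, suppNet]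
    · rw [hlive hxv]; simp [suppNet, hxv]
  · change (P.suppNet u v w).liveNet.Edge a b ↔ (P.liveNet.suppNet u v w).Edge a b
    rw [liveNet_edge_iff, suppNet_edge_iff, suppNet_edge_iff, liveNet_edge_iff]
    constructor
    · rintro ⟨⟨rfl, rfl⟩ | ⟨h, ha, hb⟩, hl⟩
      exacts [.inl ⟨rfl, rfl⟩, .inr ⟨⟨h, (hlive hb).1 hl⟩, ha, hb⟩]
    · rintro (⟨rfl, rfl⟩ | ⟨⟨h, hl⟩, ha, hb⟩)
      exacts [⟨.inl ⟨rfl, rfl⟩, (hlive hwv).2 hwl⟩,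
        ⟨.inr ⟨h, ha, hb⟩, (hlive hb).2 hl⟩]

end Suppress

/-! ### Cleaning up -/

lemma exists_subdivision_iso_suppNet {N' M L : Net X} {f : ℕ → ℕ} (hN' : N'.IsNetwork)
    (hM : Subdivision N' M) (hf : IsoWith f M L) (hL : L.Closed) {u v w : ℕ}
    (hu : L.Edge u v) (hw : L.Edge v w) (h1 : L.indeg v = 1) (h2 : L.outdeg v = 1) :
    ∃ M₂, Subdivision N' M₂ ∧ Iso M₂ (L.suppNet u v w) := by
  have hMC := (Subdivision.invariant hN' hM).closed
  obtain ⟨u', hu', rfl⟩ := hf.1.surjOn (hL _ hu).1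
  obtain ⟨v', hv', rfl⟩ := hf.1.surjOn (hL _ hu).2
  obtain ⟨w', hw', rfl⟩ := hf.1.surjOn (hL _ hw).2
  refine ⟨_, hM.suppNet hN' ?_ ?_ ((hf.2.1 _ hu' _ hv').2 hu) ((hf.2.1 _ hv' _ hw').2 hw),
    f, hf.suppNet hu' hv' hw'⟩
  · rw [hf.indeg_eq hMC hL hv', h1]
  · rw [hf.outdeg_eq hMC hL hv', h2]

structure CleanInvariant (N' P : Net X) : Prop where
  closed : P.Closed
  acyclic : P.Acyclic
  lab_eq_none : ∀ y, 0 < P.outdeg y → P.lab y = none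
  liveNet_iso : ∃ M, Subdivision N' M ∧ Iso M P.liveNet

lemma CleanStep.card_verts_lt {P Q : Net X} (hC : P.Closed) (h : CleanStep P Q) :
    Q.verts.card < P.verts.card := by
  cases h with
  | delNode v hv => exact Finset.card_erase_lt_of_mem hv
  | suppress u v w _ _ hu => exact Finset.card_erase_lt_of_mem (hC _ hu).2

lemma CleanInvariant.cleanStep {N' P Q : Net X} (hN' : N'.IsNetwork) (hI : CleanInvariant N' P)
    (h : CleanStep P Q) : CleanInvariant N' Q := by
  obtain ⟨hC, hA, hlab, M, hM, hiso⟩ := hI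
  cases h with
  | delNode v hv h0 hl =>
    refine ⟨hC.deleteNode v, hA.mono fun a b h => (deleteNode_edge_iff.1 h).1,
      fun y hy => hlab y (hy.trans_le (outdeg_mono (Finset.filter_subset _ _) y)), M, hM, ?_⟩
    rwa [liveNet_deleteNode (not_isLive_of_outdeg_eq_zero hl h0)]
  | suppress u v w h1 h2 hu hw =>
    refine ⟨hC.suppNet hu hw hA, hA.suppNet hu hw, fun y hy => ?_, ?_⟩
    · obtain ⟨c, hc⟩ := outdeg_pos_iff.1 hy
      refine hlab y (outdeg_pos_iff.2 ?_)
      rcases suppNet_edge_iff.1 hc with ⟨rfl, -⟩ | ⟨hc, -⟩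
      exacts [⟨v, hu⟩, ⟨c, hc⟩]
    · by_cases hv : P.IsLive v
      · obtain ⟨f, hf⟩ := hiso
        have hlv := hlab v (by omega)
        change ∃ M, Subdivision N' M ∧ Iso M (P.suppNet u v w).liveNet
        rw [liveNet_suppNet_of_isLive hu hw hA h1 h2 hlab hv]
        exact exists_subdivision_iso_suppNet hN' hM hf hC.liveNet
          (liveNet_edge_iff.2 ⟨hu, hv⟩)
          (liveNet_edge_iff.2 ⟨hw, hv.of_outdeg_eq_one hlv h2 hw⟩)
          (by rw [liveNet_indeg hv, h1]) (liveNet_outdeg hv hlv h2 hw)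
      · refine ⟨M, hM, ?_⟩
        change Iso M (P.suppNet u v w).liveNet
        rwa [liveNet_suppNet_of_not_isLive hu hw hA h1 h2 hlab hv]

lemma CleanInvariant.exists_cleansTo {N' P : Net X} (hN' : N'.IsNetwork)
    (hI : CleanInvariant N' P) : ∃ M, CleansTo P M ∧ CleanInvariant N' M := by
  induction hn : P.verts.card using Nat.strong_induction_on generalizing P with
  | _ n ih =>
    by_cases hterm : ∃ Q, CleanStep P Q
    · obtain ⟨Q, hs⟩ := hterm
      obtain ⟨M, ⟨hQM, hM⟩, hIM⟩ :=
        ih _ (hn ▸ hs.card_verts_lt hI.closed) (hI.cleanStep hN' hs) rfl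
      exact ⟨M, ⟨.head hs hQM, hM⟩, hIM⟩
    · exact ⟨P, ⟨.refl, not_exists.1 hterm⟩, hI⟩

lemma CleanInvariant.iso_of_terminal {N' P : Net X} (hN' : N'.IsNetwork)
    (hI : CleanInvariant N' P) (hterm : ∀ Q, ¬ CleanStep P Q) : P.Iso N' := by
  obtain ⟨hC, hA, -, M, hM, f, hf⟩ := hI
  have hlive : ∀ v ∈ P.verts, P.IsLive v := fun v hv => by
    obtain ⟨l, hl, h0, hvl⟩ := exists_reaches_outdeg_eq_zero hC hA hv
    cases hlab : P.lab l with
    | none => exact absurd (CleanStep.delNode P l hl h0 hlab) (hterm _)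
    | some x => exact ⟨l, ⟨x, hlab⟩, hvl⟩
  have hPL : P.liveNet = P := ext (Finset.filter_true_of_mem hlive)
    (Finset.filter_true_of_mem fun e he => hlive _ (hC e he).2) rfl
  replace hf : IsoWith f M P := hPL ▸ hf
  have hMC := (Subdivision.invariant hN' hM).closed
  suffices M = N' from this ▸ Iso.symm ⟨f, hf⟩
  refine hM.eq_of_forall_not_deg_one_one hN' fun x hx ⟨h1, h2⟩ => ?_
  rw [hf.indeg_eq hMC hC hx] at h1
  rw [hf.outdeg_eq hMC hC hx] at h2
  obtain ⟨a, ha⟩ := indeg_pos_iff.1 (h1 ▸ one_pos)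
  obtain ⟨b, hb⟩ := outdeg_pos_iff.1 (h2 ▸ one_pos)
  exact hterm _ (CleanStep.suppress P a (f x) b h1 h2 ha hb)

/-! ### Embeddings of subdivisions -/

def imageIn (f : ℕ → ℕ) (M N : Net X) : Net X :=
  ⟨M.verts.image f, M.edges.image (Prod.map f f), N.lab⟩

structure IsEmbedding (f : ℕ → ℕ) (M N : Net X) : Prop where
  injOn : Set.InjOn f M.verts
  map_edge : ∀ a b, M.Edge a b → N.Edge (f a) (f b)
  map_lab : ∀ a ∈ M.verts, M.lab a = N.lab (f a)

namespace IsEmbedding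

variable {M N : Net X} {f : ℕ → ℕ}

lemma map_reaches (hf : IsEmbedding f M N) {a b : ℕ} (h : M.Reaches a b) :
    N.Reaches (f a) (f b) :=
  Relation.ReflTransGen.lift f hf.map_edge _ _ h

lemma isoWith_image (hf : IsEmbedding f M N) (hC : M.Closed) : IsoWith f M (imageIn f M N) := by
  refine ⟨?_, fun a ha b hb => ?_, hf.map_lab⟩
  · simpa [imageIn] using hf.injOn.bijOn_image
  · refine ⟨fun h => Finset.mem_image_of_mem _ h, fun h => ?_⟩
    obtain ⟨⟨a', b'⟩, hab', he⟩ := Finset.mem_image.1 h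
    simp only [Prod.map, Prod.mk.injEq] at he
    obtain ⟨ha', hb'⟩ := hC _ hab'
    rwa [← hf.injOn ha' ha he.1, ← hf.injOn hb' hb he.2]

-- `r` moves up to `x`, and the new vertex `w` takes over the old image `f r`.
lemma subdivNet_root (hf : IsEmbedding f M N) (hC : M.Closed) {r c w x : ℕ}
    (hrc : M.Edge r c) (hr0 : M.indeg r = 0) (hr1 : M.outdeg r = 1) (hw : w ∉ M.verts)
    (hx : N.Edge x (f r)) (hxf : ∀ a ∈ M.verts, f a ≠ x) (hlr : M.lab r = none)
    (hlw : M.lab w = none) (hlx : N.lab x = none) :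
    IsEmbedding (fun y => if y = w then f r else if y = r then x else f y)
      (M.subdivNet r c w) N := by
  have hr := (hC _ hrc).1
  have hrw : r ≠ w := fun h => hw (h ▸ hr)
  have hin : ∀ {a}, ¬ M.Edge a r := fun h => (indeg_pos_iff.2 ⟨_, h⟩).ne' hr0
  refine ⟨fun a ha b hb hab => ?_, fun a b hab => ?_, fun a ha => ?_⟩
  · have inj : ∀ a ∈ M.verts, ∀ b ∈ M.verts, f a = f b → a = b :=
      fun a ha b hb => hf.injOn ha hb
    simp only [subdivNet, Finset.coe_insert, Set.mem_insert_iff, Finset.mem_coe] at ha hb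
    grind
  · obtain ⟨hrw', hcw⟩ := hC.ne_of_edge_of_notMem hw hrc
    rcases subdivNet_edge_iff.1 hab with ⟨ha, hb⟩ | ⟨ha, hb⟩ | ⟨hab, hne⟩
    · simpa [ha, hb, hrw] using hx
    · have hcr : c ≠ r := fun h => hin (h ▸ hrc)
      simpa [ha, hb, hcw, hcr] using hf.map_edge _ _ hrc
    · obtain ⟨haw, hbw⟩ := hC.ne_of_edge_of_notMem hw hab
      have hbr : b ≠ r := fun h => hin (h ▸ hab)
      have har : a ≠ r := fun h => hne ⟨h, eq_of_edge_of_outdeg_le_one hr1.le (h ▸ hab) hrc⟩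
      simpa [haw, hbw, har, hbr] using hf.map_edge _ _ hab
  · rcases Finset.mem_insert.1 ha with rfl | ha
    · simp only [subdivNet, if_true]
      rw [hlw, ← hf.map_lab r hr, hlr]
    · have haw : a ≠ w := fun h => hw (h ▸ ha)
      by_cases har : a = r
      · simp [har, hrw, hlr, hlx, subdivNet]
      · simpa [haw, har, subdivNet] using hf.map_lab a ha

end IsEmbedding

lemma Displays.exists_embedding {N N' : Net X} (hN' : N'.IsNetwork) (h : N.Displays N') :
    ∃ M f, Subdivision N' M ∧ IsEmbedding f M N := by
  obtain ⟨S, M, hS, hM, f, hbij, he, hl⟩ := h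
  have hC := (Subdivision.invariant hN' hM).closed
  refine ⟨M, f, hM, hbij.injOn, fun a b hab => ?_, fun a ha => ?_⟩
  · exact hS.2.1 ((he a (hC _ hab).1 b (hC _ hab).2).1 hab)
  · rw [hl a ha, hS.2.2 _ (hbij.mapsTo ha)]

lemma IsEmbedding.exists_root_eq {N N' M : Net X} {f : ℕ → ℕ} (hN : N.IsNetwork)
    (hN' : N'.IsNetwork) (hM : Subdivision N' M) (hf : IsEmbedding f M N) {r x : ℕ}
    (hr : N'.IsRoot r) (hx : N.Reaches x (f r)) :
    ∃ M₂ g, Subdivision N' M₂ ∧ IsEmbedding g M₂ N ∧ g r = x := by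
  induction hx using Relation.ReflTransGen.head_induction_on with
  | refl => exact ⟨M, f, hM, hf, rfl⟩
  | @head x c hxc _ ih =>
    obtain ⟨M₂, g, hM₂, hg, rfl⟩ := ih
    have inv := Subdivision.invariant hN' hM₂
    have hrM := inv.verts_subset hr.1
    obtain ⟨hr0, hr1⟩ := inv.deg_old r hr.1
    rw [hr.2.1] at hr0
    rw [hr.2.2] at hr1
    obtain ⟨c, hrc⟩ := outdeg_pos_iff.1 (hr1 ▸ one_pos)
    obtain ⟨w, hw⟩ := Infinite.exists_notMem_finset M₂.verts
    have hrw : r ≠ w := fun h => hw (h ▸ hrM)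
    refine ⟨_, _, hM₂.tail (.mk _ r c w hrc hw), hg.subdivNet_root inv.closed hrc hr0 hr1 hw hxc
      (fun a ha hga => ?_) ?_ ?_ ?_, by simp [hrw]⟩
    · have hra := reaches_of_unique_source inv.closed inv.acyclic
        (fun y hy h0 => inv.eq_root_of_indeg_eq_zero hN' hr hy h0) ha
      exact hN.acyclic _ _ hxc (hga ▸ hg.map_reaches hra)
    · rw [inv.lab_eq]; exact hN'.lab_eq_none_of_outdeg_pos (hr.2.2 ▸ one_pos)
    · rw [inv.lab_eq]; exact hN'.lab_eq_none_of_notMem fun h => hw (inv.verts_subset h)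
    · exact hN.lab_eq_none_of_outdeg_pos (outdeg_pos_iff.2 ⟨_, hxc⟩)

def unusedInEdges (N : Net X) (f : ℕ → ℕ) (M : Net X) : Finset (ℕ × ℕ) :=
  (N.edges \ M.edges.image (Prod.map f f)).filter (·.2 ∈ M.verts.image f)

lemma exists_image_edge_of_mem_unusedInEdges {N N' M : Net X} {f : ℕ → ℕ} {r : ℕ}
    (hN' : N'.IsNetwork) (hM : Subdivision N' M) (hr : N'.IsRoot r) (h0 : N.indeg (f r) = 0)
    {e : ℕ × ℕ} (he : e ∈ N.unusedInEdges f M) :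
    ∃ p, (p, e.2) ∈ M.edges.image (Prod.map f f) := by
  have inv := Subdivision.invariant hN' hM
  obtain ⟨heN, hd⟩ := Finset.mem_filter.1 he
  obtain ⟨b, hb, hbe⟩ := Finset.mem_image.1 hd
  have hbr : b ≠ r := by
    rintro rfl
    exact (indeg_pos_iff.2 ⟨e.1, hbe ▸ (Finset.mem_sdiff.1 heN).1⟩).ne' h0
  obtain ⟨a, hab⟩ := indeg_pos_iff.1 <| Nat.pos_of_ne_zero fun hb0 =>
    hbr (inv.eq_root_of_indeg_eq_zero hN' hr hb hb0)
  exact ⟨f a, hbe ▸ Finset.mem_image_of_mem (Prod.map f f) hab⟩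

lemma mem_image_of_edge_deleteEdges {N M : Net X} {f : ℕ → ℕ} {a b : ℕ}
    (hab : (N.deleteEdges (N.unusedInEdges f M)).Edge a b) (hb : b ∈ M.verts.image f) :
    (a, b) ∈ M.edges.image (Prod.map f f) := by
  by_contra h
  obtain ⟨hab, hE⟩ := Finset.mem_sdiff.1 hab
  exact hE (Finset.mem_filter.2 ⟨Finset.mem_sdiff.2 ⟨hab, h⟩, hb⟩)

namespace IsEmbedding

variable {N N' M : Net X} {f : ℕ → ℕ}

lemma edge_of_mem_image (hf : IsEmbedding f M N) {x y : ℕ}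
    (h : (x, y) ∈ M.edges.image (Prod.map f f)) : N.Edge x y := by
  obtain ⟨⟨a, b⟩, hab, he⟩ := Finset.mem_image.1 h
  simp only [Prod.map, Prod.mk.injEq] at he
  exact he.1 ▸ he.2 ▸ hf.map_edge a b hab

lemma edge_deleteEdges (hf : IsEmbedding f M N) {a b : ℕ} (hab : M.Edge a b) :
    (N.deleteEdges (N.unusedInEdges f M)).Edge (f a) (f b) :=
  Finset.mem_sdiff.2 ⟨hf.map_edge a b hab, fun h =>
    (Finset.mem_sdiff.1 (Finset.mem_filter.1 h).1).2 (Finset.mem_image_of_mem _ hab)⟩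

variable (hN : N.IsNetwork) (hN' : N'.IsNetwork) (hM : Subdivision N' M) (hf : IsEmbedding f M N)
include hN hN' hM hf

lemma mem_image_of_lab_eq_some {l : ℕ} {y : X} (hl : N.lab l = some y) :
    l ∈ M.verts.image f := by
  obtain ⟨v, hv, -⟩ := hN'.existsUnique_lab y
  have hvM := (Subdivision.invariant hN' hM).verts_subset ((hN'.exists_lab_iff v).1 ⟨y, hv⟩).1
  have hfv : N.lab (f v) = some y := by
    rw [← hf.map_lab v hvM, (Subdivision.invariant hN' hM).lab_eq, hv]
  exact hN.eq_of_lab_eq hl hfv ▸ Finset.mem_image_of_mem f hvM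

lemma isLive_deleteEdges {a : ℕ} (ha : a ∈ M.verts) :
    f a ∈ N.verts ∧ (N.deleteEdges (N.unusedInEdges f M)).IsLive (f a) := by
  have inv := Subdivision.invariant hN' hM
  obtain ⟨l, hl, h0, hal⟩ := exists_reaches_outdeg_eq_zero inv.closed inv.acyclic ha
  obtain ⟨y, hy⟩ := Option.ne_none_iff_exists'.1 (inv.lab_ne_none_of_outdeg_eq_zero hN' hl h0)
  have hfl : N.lab (f l) = some y := by rw [← hf.map_lab l hl, hy]
  have hr : (N.deleteEdges (N.unusedInEdges f M)).Reaches (f a) (f l) :=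
    Relation.ReflTransGen.lift f (fun _ _ => hf.edge_deleteEdges) _ _ hal
  refine ⟨?_, f l, ⟨y, hfl⟩, hr⟩
  rcases Relation.ReflTransGen.cases_head hr with h | ⟨c, hc, -⟩
  exacts [h ▸ ((hN.exists_lab_iff _).1 ⟨y, hfl⟩).1, (hN.closed _ (Finset.mem_sdiff.1 hc).1).1]

lemma mem_image_of_isLive_deleteEdges {x : ℕ}
    (hx : (N.deleteEdges (N.unusedInEdges f M)).IsLive x) : x ∈ M.verts.image f := by
  obtain ⟨l, ⟨y, hy⟩, hr⟩ := hx
  by_contra hx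
  obtain ⟨c, d, hc, hd, hcd⟩ :=
    hr.exists_edge_into (hf.mem_image_of_lab_eq_some hN hN' hM hy) hx
  obtain ⟨⟨a, b⟩, hab, he⟩ := Finset.mem_image.1 (mem_image_of_edge_deleteEdges hcd hd)
  simp only [Prod.map, Prod.mk.injEq] at he
  exact hc (he.1 ▸ Finset.mem_image_of_mem f ((Subdivision.invariant hN' hM).closed _ hab).1)

lemma liveNet_deleteEdges_unusedInEdges :
    (N.deleteEdges (N.unusedInEdges f M)).liveNet = imageIn f M N := by
  refine ext (Finset.ext fun x => ?_) (Finset.ext fun ⟨a, b⟩ => ?_) rfl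
  · rw [mem_liveNet_verts]
    refine ⟨fun h => hf.mem_image_of_isLive_deleteEdges hN hN' hM h.2, fun h => ?_⟩
    obtain ⟨a, ha, rfl⟩ := Finset.mem_image.1 h
    exact hf.isLive_deleteEdges hN hN' hM ha
  · change (N.deleteEdges (N.unusedInEdges f M)).liveNet.Edge a b ↔ _
    rw [liveNet_edge_iff]
    refine ⟨fun h => mem_image_of_edge_deleteEdges h.1
      (hf.mem_image_of_isLive_deleteEdges hN hN' hM h.2), fun h => ?_⟩
    obtain ⟨⟨a', b'⟩, hab, he⟩ := Finset.mem_image.1 h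
    simp only [Prod.map, Prod.mk.injEq] at he
    rw [← he.1, ← he.2]
    exact ⟨hf.edge_deleteEdges hab,
      (hf.isLive_deleteEdges hN hN' hM ((Subdivision.invariant hN' hM).closed _ hab).2).2⟩

lemma cleanInvariant_deleteEdges_unusedInEdges :
    CleanInvariant N' (N.deleteEdges (N.unusedInEdges f M)) := by
  have inv := Subdivision.invariant hN' hM
  refine ⟨fun e he => hN.closed e (Finset.mem_sdiff.1 he).1,
    Acyclic.mono hN.acyclic fun a b h => (Finset.mem_sdiff.1 h).1, fun y hy => ?_, M, hM, f, ?_⟩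
  · exact hN.lab_eq_none_of_outdeg_pos (hy.trans_le (outdeg_mono Finset.sdiff_subset y))
  · rw [hf.liveNet_deleteEdges_unusedInEdges hN hN' hM]
    exact hf.isoWith_image inv.closed

variable {r : ℕ} (hr : N'.IsRoot r) (h0 : N.indeg (f r) = 0)
include hr h0

lemma isReticEdge_of_mem_unusedInEdges {e : ℕ × ℕ} (he : e ∈ N.unusedInEdges f M) :
    N.IsReticEdge e := by
  obtain ⟨p, hp⟩ := exists_image_edge_of_mem_unusedInEdges hN' hM hr h0 he
  obtain ⟨heN, heT⟩ := Finset.mem_sdiff.1 (Finset.mem_filter.1 he).1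
  have hpe : p ≠ e.1 := fun h => heT (by rwa [h] at hp)
  exact ⟨heN, hN.isRetic_of_two_le_indeg (hN.closed _ heN).2
    (two_le_indeg (hf.edge_of_mem_image hp) heN hpe)⟩

lemma eq_of_mem_unusedInEdges {e e' : ℕ × ℕ} (he : e ∈ N.unusedInEdges f M)
    (he' : e' ∈ N.unusedInEdges f M) (h : e.2 = e'.2) : e = e' := by
  obtain ⟨p, hp⟩ := exists_image_edge_of_mem_unusedInEdges hN' hM hr h0 he
  obtain ⟨heN, heT⟩ := Finset.mem_sdiff.1 (Finset.mem_filter.1 he).1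
  obtain ⟨heN', heT'⟩ := Finset.mem_sdiff.1 (Finset.mem_filter.1 he').1
  have hpe : p ≠ e.1 := fun h => heT (by rwa [h] at hp)
  have hpe' : p ≠ e'.1 := fun h' => heT' (by rwa [h', h] at hp)
  have hdeg := (isReticEdge_of_mem_unusedInEdges hN hN' hM hf hr h0 he).2.2.1
  refine Prod.ext (eq_of_indeg_le_two hdeg.le (hf.edge_of_mem_image hp) heN ?_ hpe hpe') h
  exact h ▸ heN'

end IsEmbedding

lemma Displays.exists_rooted_embedding {N N' : Net X} (hN : N.IsNetwork) (hN' : N'.IsNetwork)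
    (h : N.Displays N') {r : ℕ} (hr : N'.IsRoot r) :
    ∃ M f, Subdivision N' M ∧ IsEmbedding f M N ∧ N.indeg (f r) = 0 := by
  obtain ⟨M, f, hM, hf⟩ := h.exists_embedding hN'
  obtain ⟨ρ, hρ, hρu⟩ := hN.existsUnique_root
  obtain ⟨c, hrc⟩ := outdeg_pos_iff.1 <|
    ((Subdivision.invariant hN' hM).deg_old r hr.1).2.trans hr.2.2 ▸ one_pos
  have hρr : N.Reaches ρ (f r) := reaches_of_unique_source hN.closed hN.acyclic
    (fun x hx h0 => hρu x (hN.isRoot_of_indeg_eq_zero hx h0)) (hN.closed _ (hf.map_edge r c hrc)).1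
  obtain ⟨M₂, g, hM₂, hg, hgr⟩ := hf.exists_root_eq hN hN' hM hr hρr
  exact ⟨M₂, g, hM₂, hg, hgr ▸ hρ.2.1⟩

end Net

/-- If `N` displays `N'`, then `N'` is obtained from `N` by deleting,
for each reticulation, at most one incoming reticulation edge, and cleaning up. -/
theorem displays_iff_delete_retic_edges {X : Type} (N N' : Net X)
    (hN : N.IsNetwork) (hN' : N'.IsNetwork) (h : N.Displays N') :
    ∃ (E : Finset (ℕ × ℕ)) (M : Net X),
      (∀ e ∈ E, N.IsReticEdge e) ∧
      (∀ r, N.IsRetic r → ∀ e ∈ E, ∀ e' ∈ E, e.2 = r → e'.2 = r → e = e') ∧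
      Net.CleansTo (N.deleteEdges E) M ∧ Net.Iso M N' := by
  obtain ⟨r, hr, -⟩ := hN'.existsUnique_root
  obtain ⟨M, f, hM, hf, h0⟩ := h.exists_rooted_embedding hN hN' hr
  obtain ⟨P, hclean, hP⟩ :=
    (hf.cleanInvariant_deleteEdges_unusedInEdges hN hN' hM).exists_cleansTo hN'
  exact ⟨_, P, fun e he => hf.isReticEdge_of_mem_unusedInEdges hN hN' hM hr h0 he,
    fun _ _ e he e' he' h₁ h₂ =>
      hf.eq_of_mem_unusedInEdges hN hN' hM hr h0 he he' (h₁.trans h₂.symm),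
    hclean, hP.iso_of_terminal hN' hclean.2⟩
end
end

section
/- Every maximum subnetwork of a binary tree-child phylogenetic network is tree-child; that is, deleting a single reticulation edge from a tree-child network and cleaning up yields a tree-child network. -/
open scoped Classical
noncomputable section

/-!
Deleting the reticulation edge `p → r` leaves exactly two vertices of indegree and outdegree 1:
the tree node `p`, between its parent `pp` and its other child `pc`, and the reticulation `r`,
between its other parent `q` and its child `c`. All other vertices keep their degrees, so clean-up
can only suppress `p` and `r`. By the tree-child property `pc` and `c` are tree nodes or leaves, so
their only parents are `p` and `r` and neither suppression creates a parallel edge. Hence the two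
suppressions commute, and clean-up always ends in `N - {p, r} + {pp → pc, q → c}`, where every
remaining vertex has its old degrees. That network is tree-child: a vertex whose tree-node-or-leaf
child was `p` is `pp`, which now has the child `pc`.
-/

namespace Net

variable {α : Type} {N G G' M : Net α} {u u' v w w' x a b p r : ℕ} {e : ℕ × ℕ}

lemma eq_of_edge_of_indeg_eq_one (h : N.indeg v = 1) (hu : N.Edge u v) (hu' : N.Edge u' v) :
    u = u' :=
  congrArg Prod.fst <| Finset.card_le_one.mp h.le _ (Finset.mem_filter.mpr ⟨hu, rfl⟩) _
    (Finset.mem_filter.mpr ⟨hu', rfl⟩)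

lemma eq_of_edge_of_outdeg_eq_one (h : N.outdeg v = 1) (hw : N.Edge v w) (hw' : N.Edge v w') :
    w = w' :=
  congrArg Prod.snd <| Finset.card_le_one.mp h.le _ (Finset.mem_filter.mpr ⟨hw, rfl⟩) _
    (Finset.mem_filter.mpr ⟨hw', rfl⟩)

lemma exists_edge_of_indeg_pos (h : 0 < N.indeg v) : ∃ u, N.Edge u v := by
  obtain ⟨⟨u, v'⟩, he⟩ := Finset.card_pos.mp h
  obtain ⟨he, hv : v' = v⟩ := Finset.mem_filter.mp he
  exact ⟨u, hv ▸ he⟩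

lemma outdeg_pos_of_edge (h : N.Edge u v) : 0 < N.outdeg u :=
  Finset.card_pos.mpr ⟨_, Finset.mem_filter.mpr ⟨h, rfl⟩⟩

lemma exists_edge_ne_of_one_lt_indeg (h : 1 < N.indeg v) (u : ℕ) :
    ∃ u', N.Edge u' v ∧ u' ≠ u := by
  obtain ⟨⟨u', v'⟩, he, hne⟩ := Finset.exists_mem_ne h (u, v)
  obtain ⟨he, hv : v' = v⟩ := Finset.mem_filter.mp he
  exact ⟨u', hv ▸ he, fun h => hne (by rw [h, hv])⟩

lemma two_le_outdeg (hw : N.Edge v w) (hw' : N.Edge v w') (hne : w ≠ w') : 2 ≤ N.outdeg v :=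
  Finset.one_lt_card.mpr ⟨_, Finset.mem_filter.mpr ⟨hw, rfl⟩, _,
    Finset.mem_filter.mpr ⟨hw', rfl⟩, fun h => hne (congrArg Prod.snd h)⟩

lemma edge_deleteEdge_iff :
    (N.deleteEdge e).Edge a b ↔ N.Edge a b ∧ (a, b) ≠ e := by
  simp only [Edge, deleteEdge, Finset.mem_erase, and_comm]

lemma indeg_deleteEdge_of_ne (hx : x ≠ e.2) : (N.deleteEdge e).indeg x = N.indeg x := by
  unfold indeg deleteEdge
  rw [Finset.filter_erase, Finset.erase_eq_of_notMem fun he => hx (Finset.mem_filter.mp he).2.symm]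

lemma outdeg_deleteEdge_of_ne (hx : x ≠ e.1) : (N.deleteEdge e).outdeg x = N.outdeg x := by
  unfold outdeg deleteEdge
  rw [Finset.filter_erase, Finset.erase_eq_of_notMem fun he => hx (Finset.mem_filter.mp he).2.symm]

lemma indeg_deleteEdge_self (he : N.Edge u v) : (N.deleteEdge (u, v)).indeg v + 1 = N.indeg v := by
  unfold indeg deleteEdge
  rw [Finset.filter_erase]
  exact Finset.card_erase_add_one (Finset.mem_filter.mpr ⟨he, rfl⟩)

lemma outdeg_deleteEdge_self (he : N.Edge u v) :
    (N.deleteEdge (u, v)).outdeg u + 1 = N.outdeg u := by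
  unfold outdeg deleteEdge
  rw [Finset.filter_erase]
  exact Finset.card_erase_add_one (Finset.mem_filter.mpr ⟨he, rfl⟩)

def suppress (N : Net α) (u v w : ℕ) : Net α :=
  ⟨N.verts.erase v, insert (u, w) (N.edges.filter fun e => e.1 ≠ v ∧ e.2 ≠ v), N.lab⟩

lemma edge_suppress_iff :
    (N.suppress u v w).Edge a b ↔ (a = u ∧ b = w) ∨ (N.Edge a b ∧ a ≠ v ∧ b ≠ v) := by
  simp only [Edge, suppress, Finset.mem_insert, Finset.mem_filter, Prod.mk.injEq]

lemma edge_suppress_self : (N.suppress u v w).Edge u w :=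
  edge_suppress_iff.mpr (.inl ⟨rfl, rfl⟩)

lemma edge_suppress_of_edge (h : N.Edge a b) (ha : a ≠ v) (hb : b ≠ v) :
    (N.suppress u v w).Edge a b :=
  edge_suppress_iff.mpr (.inr ⟨h, ha, hb⟩)

lemma indeg_suppress_self (hw : w ≠ v) : (N.suppress u v w).indeg v = 0 := by
  refine Finset.card_eq_zero.mpr (Finset.filter_eq_empty_iff.mpr fun e he hev => ?_)
  rcases edge_suppress_iff.mp he with ⟨-, h⟩ | ⟨-, -, h⟩
  · exact hw (h ▸ hev)
  · exact h hev

lemma suppress_comm {u₁ v₁ w₁ u₂ v₂ w₂ : ℕ} (hu₁ : u₁ ≠ v₂) (hw₁ : w₁ ≠ v₂) (hu₂ : u₂ ≠ v₁)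
    (hw₂ : w₂ ≠ v₁) :
    (N.suppress u₁ v₁ w₁).suppress u₂ v₂ w₂ = (N.suppress u₂ v₂ w₂).suppress u₁ v₁ w₁ := by
  simp only [suppress, mk.injEq, Finset.erase_right_comm, true_and, and_true]
  ext ⟨a, b⟩
  simp only [Finset.mem_insert, Finset.mem_filter, Prod.mk.injEq]
  grind

structure Suppressible (N : Net α) (u v w : ℕ) : Prop where
  indeg_eq_one : N.indeg v = 1
  outdeg_eq_one : N.outdeg v = 1
  edge_in : N.Edge u v
  edge_out : N.Edge v w
  not_edge : ¬ N.Edge u w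

namespace Suppressible

lemma left_ne (h : N.Suppressible u v w) : u ≠ v := by
  rintro rfl
  exact h.not_edge (eq_of_edge_of_outdeg_eq_one h.outdeg_eq_one h.edge_in h.edge_out ▸ h.edge_in)

lemma right_ne (h : N.Suppressible u v w) : w ≠ v := by
  rintro rfl
  exact h.not_edge (eq_of_edge_of_indeg_eq_one h.indeg_eq_one h.edge_out h.edge_in ▸ h.edge_out)

lemma cleanStep (h : N.Suppressible u v w) : CleanStep N (N.suppress u v w) :=
  CleanStep.suppress N u v w h.indeg_eq_one h.outdeg_eq_one h.edge_in h.edge_out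

lemma suppress_eq (h : N.Suppressible u v w) (hu : N.Edge u' v) (hw : N.Edge v w') :
    N.suppress u' v w' = N.suppress u v w := by
  rw [eq_of_edge_of_indeg_eq_one h.indeg_eq_one hu h.edge_in,
    eq_of_edge_of_outdeg_eq_one h.outdeg_eq_one hw h.edge_out]

lemma indeg_suppress (h : N.Suppressible u v w) (hx : x ≠ v) :
    (N.suppress u v w).indeg x = N.indeg x := by
  unfold indeg
  by_cases hxw : x = w
  · subst hxw
    have hin : ((N.suppress u v x).edges.filter fun e => e.2 = x) =
        insert (u, x) ((N.edges.filter fun e => e.2 = x).erase (v, x)) := by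
      ext ⟨a, b⟩
      simp only [suppress, Finset.mem_filter, Finset.mem_insert, Finset.mem_erase, Prod.mk.injEq]
      grind
    rw [hin, Finset.card_insert_of_notMem fun hm =>
      h.not_edge (Finset.mem_filter.mp (Finset.mem_of_mem_erase hm)).1]
    exact Finset.card_erase_add_one (Finset.mem_filter.mpr ⟨h.edge_out, rfl⟩)
  · congr 1
    ext ⟨a, b⟩
    have hav : N.Edge a x → a ≠ v := fun hax hav =>
      hxw (eq_of_edge_of_outdeg_eq_one h.outdeg_eq_one (hav ▸ hax) h.edge_out)
    simp only [suppress, Finset.mem_filter, Finset.mem_insert, Prod.mk.injEq]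
    grind [Edge]

lemma outdeg_suppress (h : N.Suppressible u v w) (hx : x ≠ v) :
    (N.suppress u v w).outdeg x = N.outdeg x := by
  unfold outdeg
  by_cases hxu : x = u
  · subst hxu
    have hout : ((N.suppress x v w).edges.filter fun e => e.1 = x) =
        insert (x, w) ((N.edges.filter fun e => e.1 = x).erase (x, v)) := by
      ext ⟨a, b⟩
      simp only [suppress, Finset.mem_filter, Finset.mem_insert, Finset.mem_erase, Prod.mk.injEq]
      grind
    rw [hout, Finset.card_insert_of_notMem fun hm =>
      h.not_edge (Finset.mem_filter.mp (Finset.mem_of_mem_erase hm)).1]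
    exact Finset.card_erase_add_one (Finset.mem_filter.mpr ⟨h.edge_in, rfl⟩)
  · congr 1
    ext ⟨a, b⟩
    have hbv : N.Edge x b → b ≠ v := fun hxb hbv =>
      hxu (eq_of_edge_of_indeg_eq_one h.indeg_eq_one (hbv ▸ hxb) h.edge_in)
    simp only [suppress, Finset.mem_filter, Finset.mem_insert, Prod.mk.injEq]
    grind [Edge]

lemma transGen_of_edge_suppress (h : N.Suppressible u v w)
    (hab : (N.suppress u v w).Edge a b) : Relation.TransGen N.Edge a b := by
  rcases edge_suppress_iff.mp hab with ⟨rfl, rfl⟩ | ⟨hab, -⟩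
  · exact .tail (.single h.edge_in) h.edge_out
  · exact .single hab

lemma suppress {u₀ v₀ w₀ : ℕ} (h : N.Suppressible u v w) (h₀ : N.Suppressible u₀ v₀ w₀)
    (hu : u ≠ v₀) (hw : w ≠ v₀) (hne : ¬ (u = u₀ ∧ w = w₀)) :
    (N.suppress u₀ v₀ w₀).Suppressible u v w := by
  have hv : v ≠ v₀ := by
    rintro rfl
    exact hne ⟨eq_of_edge_of_indeg_eq_one h.indeg_eq_one h.edge_in h₀.edge_in,
      eq_of_edge_of_outdeg_eq_one h.outdeg_eq_one h.edge_out h₀.edge_out⟩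
  refine ⟨?_, ?_, ?_, ?_, ?_⟩
  · rw [h₀.indeg_suppress hv, h.indeg_eq_one]
  · rw [h₀.outdeg_suppress hv, h.outdeg_eq_one]
  · exact edge_suppress_iff.mpr (.inr ⟨h.edge_in, hu, hv⟩)
  · exact edge_suppress_iff.mpr (.inr ⟨h.edge_out, hv, hw⟩)
  · rw [edge_suppress_iff]
    exact fun h' => h'.elim hne fun h' => h.not_edge h'.1

end Suppressible

def EdgesInVerts (N : Net α) : Prop := ∀ e ∈ N.edges, e.1 ∈ N.verts ∧ e.2 ∈ N.verts

lemma EdgesInVerts.deleteEdge (hN : N.EdgesInVerts) : (N.deleteEdge e).EdgesInVerts :=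
  fun e' he' => hN e' (Finset.mem_of_mem_erase he')

lemma Suppressible.edgesInVerts_suppress (h : G.Suppressible u v w) (hG : G.EdgesInVerts) :
    (G.suppress u v w).EdgesInVerts := by
  rintro ⟨a, b⟩ hab
  rcases edge_suppress_iff.mp hab with ⟨rfl, rfl⟩ | ⟨hab, ha, hb⟩
  · exact ⟨Finset.mem_erase.mpr ⟨h.left_ne, (hG _ h.edge_in).1⟩,
      Finset.mem_erase.mpr ⟨h.right_ne, (hG _ h.edge_out).2⟩⟩
  · exact ⟨Finset.mem_erase.mpr ⟨ha, (hG _ hab).1⟩, Finset.mem_erase.mpr ⟨hb, (hG _ hab).2⟩⟩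

structure DegreesAgree (G N : Net α) (v : ℕ) : Prop where
  mem_iff : v ∈ G.verts ↔ v ∈ N.verts
  indeg_eq : G.indeg v = N.indeg v
  outdeg_eq : G.outdeg v = N.outdeg v

namespace DegreesAgree

lemma isRoot_iff (h : G.DegreesAgree N v) : G.IsRoot v ↔ N.IsRoot v := by
  simp only [IsRoot, h.mem_iff, h.indeg_eq, h.outdeg_eq]

lemma isLeaf_iff (h : G.DegreesAgree N v) : G.IsLeaf v ↔ N.IsLeaf v := by
  simp only [IsLeaf, h.mem_iff, h.indeg_eq, h.outdeg_eq]

lemma isTreeNode_iff (h : G.DegreesAgree N v) : G.IsTreeNode v ↔ N.IsTreeNode v := by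
  simp only [IsTreeNode, h.mem_iff, h.indeg_eq, h.outdeg_eq]

lemma isRetic_iff (h : G.DegreesAgree N v) : G.IsRetic v ↔ N.IsRetic v := by
  simp only [IsRetic, h.mem_iff, h.indeg_eq, h.outdeg_eq]

end DegreesAgree

lemma degreesAgree_deleteEdge (h₁ : x ≠ e.1) (h₂ : x ≠ e.2) : (N.deleteEdge e).DegreesAgree N x :=
  ⟨Iff.rfl, indeg_deleteEdge_of_ne h₂, outdeg_deleteEdge_of_ne h₁⟩

lemma DegreesAgree.suppress (h : G.DegreesAgree N x) (hs : G.Suppressible u v w) (hx : x ≠ v) :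
    (G.suppress u v w).DegreesAgree N x :=
  ⟨(Finset.mem_erase.trans (and_iff_right hx)).trans h.mem_iff,
    (hs.indeg_suppress hx).trans h.indeg_eq, (hs.outdeg_suppress hx).trans h.outdeg_eq⟩

lemma IsNetwork.ne_of_edge (hN : N.IsNetwork) (h : N.Edge u v) : u ≠ v := by
  rintro rfl
  exact hN.2.1 u u h .refl

lemma IsNetwork.not_edge_of_edge (hN : N.IsNetwork) (h : N.Edge u v) : ¬ N.Edge v u :=
  fun h' => hN.2.1 u v h (.single h')

lemma IsNetwork.outdeg_ne_one_of_indeg_eq_one (hN : N.IsNetwork) (h : N.indeg v = 1) :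
    N.outdeg v ≠ 1 := by
  obtain ⟨u, hu⟩ := exists_edge_of_indeg_pos (h ▸ one_pos)
  rcases hN.2.2.2.1 v (hN.1 _ hu).2 with ⟨-, h', -⟩ | ⟨-, -, h'⟩ | ⟨-, -, h'⟩ | ⟨-, h', -⟩ <;> omega

lemma IsNetwork.lab_ne_none_of_outdeg_eq_zero (hN : N.IsNetwork) (hv : v ∈ N.verts)
    (h : N.outdeg v = 0) : N.lab v ≠ none := by
  rcases hN.2.2.2.1 v hv with ⟨-, -, h'⟩ | hleaf | ⟨-, -, h'⟩ | ⟨-, -, h'⟩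
  · omega
  · obtain ⟨x, hx⟩ := (hN.2.2.2.2.1 v).mpr hleaf
    simp [hx]
  all_goals omega

lemma IsNetwork.exists_suppress_of_cleanStep (hN : N.IsNetwork) (h : CleanStep G G') {S : Set ℕ}
    (hlab : G.lab = N.lab) (hagree : ∀ x ∉ S, G.DegreesAgree N x)
    (hS : ∀ x ∈ S, x ∈ G.verts → G.outdeg x ≠ 0) :
    ∃ u v w, v ∈ S ∧ G.indeg v = 1 ∧ G.outdeg v = 1 ∧ G.Edge u v ∧ G.Edge v w ∧
      G' = G.suppress u v w := by
  cases h with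
  | delNode v hv h0 hnone =>
    by_cases hvS : v ∈ S
    · exact absurd h0 (hS v hvS hv)
    · have h := hagree v hvS
      rw [hlab] at hnone
      exact absurd hnone
        (hN.lab_ne_none_of_outdeg_eq_zero (h.mem_iff.mp hv) (h.outdeg_eq.symm.trans h0))
  | suppress u v w h1 h2 hu hw =>
    by_cases hvS : v ∈ S
    · exact ⟨u, v, w, hvS, h1, h2, hu, hw, rfl⟩
    · have h := hagree v hvS
      exact absurd (h.outdeg_eq.symm.trans h2)
        (hN.outdeg_ne_one_of_indeg_eq_one (h.indeg_eq.symm.trans h1))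

theorem IsNetwork.of_degreesAgree (hN : N.IsNetwork) (hlab : G.lab = N.lab)
    (hends : G.EdgesInVerts) (hagree : ∀ v ∈ G.verts, G.DegreesAgree N v)
    (hkeep : ∀ v, N.IsRoot v ∨ N.IsLeaf v → v ∈ G.verts)
    (hpath : ∀ a b, G.Edge a b → Relation.TransGen N.Edge a b) : G.IsNetwork := by
  obtain ⟨-, hacyc, ⟨ρ, hρ, hρ_uniq⟩, htype, hleaf, hlabel⟩ := hN
  have hreach : ∀ a b, G.Reaches a b → N.Reaches a b :=
    Relation.ReflTransGen.lift' id fun a b h => (hpath a b h).to_reflTransGen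
  refine ⟨hends, fun a b hab hba => ?_, ⟨ρ, ?_, fun σ hσ => ?_⟩, fun v hv => ?_, fun v => ?_,
    hlab ▸ hlabel⟩
  · obtain ⟨c, hac, hca⟩ :=
      Relation.TransGen.head'_iff.mp ((hpath a b hab).trans_left (hreach b a hba))
    exact hacyc a c hac hca
  · exact ((hagree ρ (hkeep ρ (.inl hρ))).isRoot_iff).mpr hρ
  · exact hρ_uniq σ ((hagree σ hσ.1).isRoot_iff.mp hσ)
  · have h := hagree v hv
    rw [h.isRoot_iff, h.isLeaf_iff, h.isTreeNode_iff, h.isRetic_iff]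
    exact htype v (h.mem_iff.mp hv)
  · rw [hlab, hleaf]
    exact ⟨fun h => (hagree v (hkeep v (.inr h))).isLeaf_iff.mpr h,
      fun h => (hagree v h.1).isLeaf_iff.mp h⟩

lemma indeg_eq_one_of_isTreeNode_or_isLeaf (h : N.IsTreeNode v ∨ N.IsLeaf v) : N.indeg v = 1 :=
  h.elim (·.2.1) (·.2.1)

lemma IsRetic.ne_of_isTreeNode_or_isLeaf (hr : N.IsRetic r) (h : N.IsTreeNode v ∨ N.IsLeaf v) :
    v ≠ r := by
  rintro rfl
  have := indeg_eq_one_of_isTreeNode_or_isLeaf h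
  have := hr.2.1
  omega

lemma not_isLeaf_of_edge (h : N.Edge v w) : ¬ N.IsLeaf v := fun hleaf => by
  have := hleaf.2.2
  have := outdeg_pos_of_edge h
  omega

theorem TreeChild.isTreeNode_of_edge_of_isRetic (hN : N.TreeChild) (he : N.Edge p r)
    (hr : N.IsRetic r) : N.IsTreeNode p := by
  have hp := (hN.1.1 _ he).1
  obtain ⟨c, hpc, hc⟩ := hN.2 p hp (not_isLeaf_of_edge he)
  have h2 := two_le_outdeg he hpc (hr.ne_of_isTreeNode_or_isLeaf hc).symm
  rcases hN.1.2.2.2.1 p hp with ⟨-, -, h'⟩ | ⟨-, -, h'⟩ | htree | ⟨-, -, h'⟩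
  all_goals first | exact htree | omega

/-- Around the reticulation edge `p → r`: `pp → p → pc` and `q → r → c`, where `pc` and `c` are
the children that the tree-child property provides. -/
structure ReticEdgeNbhd (N : Net α) (p r : ℕ) where
  treeChild : N.TreeChild
  edge_p_r : N.Edge p r
  isRetic_r : N.IsRetic r
  pp : ℕ
  pc : ℕ
  q : ℕ
  c : ℕ
  edge_pp_p : N.Edge pp p
  edge_p_pc : N.Edge p pc
  edge_q_r : N.Edge q r
  edge_r_c : N.Edge r c
  q_ne_p : q ≠ p
  pc_isTreeNode_or_isLeaf : N.IsTreeNode pc ∨ N.IsLeaf pc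
  c_isTreeNode_or_isLeaf : N.IsTreeNode c ∨ N.IsLeaf c

lemma ReticEdgeNbhd.nonempty (hN : N.TreeChild) (he : N.IsReticEdge (p, r)) :
    Nonempty (N.ReticEdgeNbhd p r) := by
  obtain ⟨hpr, hr⟩ := he
  have hp := hN.isTreeNode_of_edge_of_isRetic hpr hr
  obtain ⟨pp, hpp⟩ := exists_edge_of_indeg_pos (hp.2.1 ▸ one_pos)
  obtain ⟨q, hq, hqp⟩ := exists_edge_ne_of_one_lt_indeg (hr.2.1 ▸ one_lt_two) p
  obtain ⟨pc, hpc, hpcT⟩ := hN.2 p hp.1 (not_isLeaf_of_edge hpr)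
  obtain ⟨c, hc, hcT⟩ := hN.2 r hr.1 fun h => hr.ne_of_isTreeNode_or_isLeaf (.inr h) rfl
  exact ⟨⟨hN, hpr, hr, pp, pc, q, c, hpp, hpc, hq, hc, hqp, hpcT, hcT⟩⟩

namespace ReticEdgeNbhd

variable (C : N.ReticEdgeNbhd p r)

lemma isNetwork (C : N.ReticEdgeNbhd p r) : N.IsNetwork := C.treeChild.1

lemma isTreeNode_p (C : N.ReticEdgeNbhd p r) : N.IsTreeNode p :=
  C.treeChild.isTreeNode_of_edge_of_isRetic C.edge_p_r C.isRetic_r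

lemma p_ne_r (C : N.ReticEdgeNbhd p r) : p ≠ r := C.isNetwork.ne_of_edge C.edge_p_r

lemma pp_ne_r : C.pp ≠ r := fun h => C.isNetwork.not_edge_of_edge C.edge_p_r (h ▸ C.edge_pp_p)

lemma c_ne_p : C.c ≠ p := fun h => C.isNetwork.not_edge_of_edge C.edge_p_r (h ▸ C.edge_r_c)

lemma pc_ne_p : C.pc ≠ p := (C.isNetwork.ne_of_edge C.edge_p_pc).symm

lemma pc_ne_r : C.pc ≠ r := C.isRetic_r.ne_of_isTreeNode_or_isLeaf C.pc_isTreeNode_or_isLeaf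

lemma pc_ne_c : C.pc ≠ C.c := fun h => C.p_ne_r <| eq_of_edge_of_indeg_eq_one
  (indeg_eq_one_of_isTreeNode_or_isLeaf C.pc_isTreeNode_or_isLeaf) C.edge_p_pc (h ▸ C.edge_r_c)

lemma not_edge_pp_pc : ¬ N.Edge C.pp C.pc := fun h => C.isNetwork.ne_of_edge C.edge_pp_p <|
  eq_of_edge_of_indeg_eq_one (indeg_eq_one_of_isTreeNode_or_isLeaf C.pc_isTreeNode_or_isLeaf)
    h C.edge_p_pc

lemma not_edge_q_c : ¬ N.Edge C.q C.c := fun h => C.isNetwork.ne_of_edge C.edge_q_r <|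
  eq_of_edge_of_indeg_eq_one (indeg_eq_one_of_isTreeNode_or_isLeaf C.c_isTreeNode_or_isLeaf)
    h C.edge_r_c

def suppressedP : Net α := (N.deleteEdge (p, r)).suppress C.pp p C.pc

def suppressedR : Net α := (N.deleteEdge (p, r)).suppress C.q r C.c

def cleaned : Net α := C.suppressedP.suppress C.q r C.c

lemma suppressible_p : (N.deleteEdge (p, r)).Suppressible C.pp p C.pc := by
  refine ⟨?_, ?_, ?_, ?_, ?_⟩
  · rw [indeg_deleteEdge_of_ne C.p_ne_r, C.isTreeNode_p.2.1]
  · have := outdeg_deleteEdge_self C.edge_p_r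
    have := C.isTreeNode_p.2.2
    omega
  · exact edge_deleteEdge_iff.mpr ⟨C.edge_pp_p, fun h => C.p_ne_r (congrArg Prod.snd h)⟩
  · exact edge_deleteEdge_iff.mpr ⟨C.edge_p_pc, fun h => C.pc_ne_r (congrArg Prod.snd h)⟩
  · exact fun h => C.not_edge_pp_pc (edge_deleteEdge_iff.mp h).1

lemma suppressible_r : (N.deleteEdge (p, r)).Suppressible C.q r C.c := by
  refine ⟨?_, ?_, ?_, ?_, ?_⟩
  · have := indeg_deleteEdge_self C.edge_p_r
    have := C.isRetic_r.2.1
    omega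
  · rw [outdeg_deleteEdge_of_ne C.p_ne_r.symm, C.isRetic_r.2.2]
  · exact edge_deleteEdge_iff.mpr ⟨C.edge_q_r, fun h => C.q_ne_p (congrArg Prod.fst h)⟩
  · exact edge_deleteEdge_iff.mpr ⟨C.edge_r_c, fun h => C.p_ne_r (congrArg Prod.fst h).symm⟩
  · exact fun h => C.not_edge_q_c (edge_deleteEdge_iff.mp h).1

lemma suppressible_suppressedP_r : C.suppressedP.Suppressible C.q r C.c :=
  C.suppressible_r.suppress C.suppressible_p C.q_ne_p C.c_ne_p fun h => C.pc_ne_c h.2.symm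

lemma suppressible_suppressedR_p : C.suppressedR.Suppressible C.pp p C.pc :=
  C.suppressible_p.suppress C.suppressible_r C.pp_ne_r C.pc_ne_r fun h => C.pc_ne_c h.2

lemma suppressedR_suppress : C.suppressedR.suppress C.pp p C.pc = C.cleaned :=
  suppress_comm C.q_ne_p C.c_ne_p C.pp_ne_r C.pc_ne_r

lemma mem_cleaned_verts : x ∈ C.cleaned.verts ↔ x ∈ N.verts ∧ x ≠ p ∧ x ≠ r := by
  simp only [cleaned, suppressedP, suppress, deleteEdge, Finset.mem_erase]
  tauto

lemma degreesAgree_suppressedP (hp : x ≠ p) (hr : x ≠ r) : C.suppressedP.DegreesAgree N x :=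
  (degreesAgree_deleteEdge hp hr).suppress C.suppressible_p hp

lemma degreesAgree_suppressedR (hp : x ≠ p) (hr : x ≠ r) : C.suppressedR.DegreesAgree N x :=
  (degreesAgree_deleteEdge hp hr).suppress C.suppressible_r hr

lemma degreesAgree_cleaned (hp : x ≠ p) (hr : x ≠ r) : C.cleaned.DegreesAgree N x :=
  (C.degreesAgree_suppressedP hp hr).suppress C.suppressible_suppressedP_r hr

lemma cleanStep_deleted (h : CleanStep (N.deleteEdge (p, r)) G) :
    G = C.suppressedP ∨ G = C.suppressedR := by
  obtain ⟨u, v, w, hv, -, -, hu, hw, rfl⟩ := C.isNetwork.exists_suppress_of_cleanStep h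
    (S := {p, r}) rfl (fun x hx => degreesAgree_deleteEdge (not_or.mp hx).1 (not_or.mp hx).2)
    (by
      rintro x (rfl | rfl) -
      exacts [C.suppressible_p.outdeg_eq_one.trans_ne one_ne_zero,
        C.suppressible_r.outdeg_eq_one.trans_ne one_ne_zero])
  rcases hv with hv | hv <;> subst v
  · exact .inl (C.suppressible_p.suppress_eq hu hw)
  · exact .inr (C.suppressible_r.suppress_eq hu hw)

lemma cleanStep_suppressedP (h : CleanStep C.suppressedP G) : G = C.cleaned := by
  obtain ⟨u, v, w, hv, h1, -, hu, hw, rfl⟩ := C.isNetwork.exists_suppress_of_cleanStep h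
    (S := {p, r}) rfl (fun x hx => C.degreesAgree_suppressedP (not_or.mp hx).1 (not_or.mp hx).2)
    (by
      rintro x (rfl | rfl) hx
      exacts [(Finset.notMem_erase _ _ hx).elim,
        C.suppressible_suppressedP_r.outdeg_eq_one.trans_ne one_ne_zero])
  rcases hv with hv | hv <;> subst v
  · exact absurd h1 ((indeg_suppress_self C.suppressible_p.right_ne).trans_ne zero_ne_one)
  · exact C.suppressible_suppressedP_r.suppress_eq hu hw

lemma cleanStep_suppressedR (h : CleanStep C.suppressedR G) : G = C.cleaned := by
  obtain ⟨u, v, w, hv, h1, -, hu, hw, rfl⟩ := C.isNetwork.exists_suppress_of_cleanStep h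
    (S := {p, r}) rfl (fun x hx => C.degreesAgree_suppressedR (not_or.mp hx).1 (not_or.mp hx).2)
    (by
      rintro x (rfl | rfl) hx
      exacts [C.suppressible_suppressedR_p.outdeg_eq_one.trans_ne one_ne_zero,
        (Finset.notMem_erase _ _ hx).elim])
  rcases hv with hv | hv <;> subst v
  · exact (C.suppressible_suppressedR_p.suppress_eq hu hw).trans C.suppressedR_suppress
  · exact absurd h1 ((indeg_suppress_self C.suppressible_r.right_ne).trans_ne zero_ne_one)

lemma not_cleanStep_cleaned : ¬ CleanStep C.cleaned G := fun h => by
  obtain ⟨u, v, w, hv, h1, -⟩ := C.isNetwork.exists_suppress_of_cleanStep h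
    (S := {p, r}) rfl (fun x hx => C.degreesAgree_cleaned (not_or.mp hx).1 (not_or.mp hx).2)
    (by rintro x (rfl | rfl) hx <;> simp [C.mem_cleaned_verts] at hx)
  rcases hv with hv | hv <;> subst v
  · have h0 : C.cleaned.indeg p = 0 :=
      (C.suppressible_suppressedP_r.indeg_suppress C.p_ne_r).trans
        (indeg_suppress_self C.suppressible_p.right_ne)
    omega
  · have h0 : C.cleaned.indeg r = 0 :=
      indeg_suppress_self C.suppressible_suppressedP_r.right_ne
    omega

lemma eq_of_reflTransGen_cleanStep
    (h : Relation.ReflTransGen CleanStep (N.deleteEdge (p, r)) G) :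
    G = N.deleteEdge (p, r) ∨ G = C.suppressedP ∨ G = C.suppressedR ∨ G = C.cleaned := by
  induction h with
  | refl => exact .inl rfl
  | tail _ hstep ih =>
    rcases ih with rfl | rfl | rfl | rfl
    · exact (C.cleanStep_deleted hstep).elim (.inr <| .inl ·) (.inr <| .inr <| .inl ·)
    · exact .inr <| .inr <| .inr (C.cleanStep_suppressedP hstep)
    · exact .inr <| .inr <| .inr (C.cleanStep_suppressedR hstep)
    · exact absurd hstep C.not_cleanStep_cleaned

theorem eq_cleaned_of_cleansTo (h : CleansTo (N.deleteEdge (p, r)) M) : M = C.cleaned := by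
  rcases C.eq_of_reflTransGen_cleanStep h.1 with rfl | rfl | rfl | rfl
  · exact absurd C.suppressible_p.cleanStep (h.2 _)
  · exact absurd C.suppressible_suppressedP_r.cleanStep (h.2 _)
  · exact absurd C.suppressible_suppressedR_p.cleanStep (h.2 _)
  · rfl

lemma edge_cleaned_of_edge (h : N.Edge a b) (hap : a ≠ p) (hbp : b ≠ p) (har : a ≠ r)
    (hbr : b ≠ r) : C.cleaned.Edge a b :=
  edge_suppress_of_edge (edge_suppress_of_edge
    (edge_deleteEdge_iff.mpr ⟨h, fun h => hap (congrArg Prod.fst h)⟩) hap hbp) har hbr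

lemma edge_cleaned_pp_pc : C.cleaned.Edge C.pp C.pc :=
  edge_suppress_of_edge edge_suppress_self C.pp_ne_r C.pc_ne_r

lemma transGen_of_edge_cleaned (h : C.cleaned.Edge a b) : Relation.TransGen N.Edge a b := by
  have hD : ∀ a b, (N.deleteEdge (p, r)).Edge a b → Relation.TransGen N.Edge a b :=
    fun a b h => .single (edge_deleteEdge_iff.mp h).1
  have hP : ∀ a b, C.suppressedP.Edge a b → Relation.TransGen N.Edge a b :=
    fun a b h => Relation.TransGen.closed hD a b (C.suppressible_p.transGen_of_edge_suppress h)
  exact Relation.TransGen.closed hP a b (C.suppressible_suppressedP_r.transGen_of_edge_suppress h)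

lemma isNetwork_cleaned : C.cleaned.IsNetwork := by
  refine C.isNetwork.of_degreesAgree rfl ?_ (fun v hv => ?_) (fun v hv => ?_)
    fun a b => C.transGen_of_edge_cleaned
  · exact C.suppressible_suppressedP_r.edgesInVerts_suppress
      (C.suppressible_p.edgesInVerts_suppress (EdgesInVerts.deleteEdge C.isNetwork.1))
  · obtain ⟨-, hp, hr⟩ := C.mem_cleaned_verts.mp hv
    exact C.degreesAgree_cleaned hp hr
  · obtain ⟨-, hp₁, hp₂⟩ := C.isTreeNode_p
    obtain ⟨-, hr₁, hr₂⟩ := C.isRetic_r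
    refine C.mem_cleaned_verts.mpr ⟨hv.elim (·.1) (·.1), ?_, ?_⟩ <;> rintro rfl <;>
      rcases hv with ⟨-, h₁, h₂⟩ | ⟨-, h₁, h₂⟩ <;> omega

theorem treeChild_cleaned : C.cleaned.TreeChild := by
  refine ⟨C.isNetwork_cleaned, fun v hv hleaf => ?_⟩
  obtain ⟨hvN, hvp, hvr⟩ := C.mem_cleaned_verts.mp hv
  have htype : ∀ x, x ≠ p → x ≠ r → (N.IsTreeNode x ∨ N.IsLeaf x) →
      C.cleaned.IsTreeNode x ∨ C.cleaned.IsLeaf x := fun x hp hr hx => by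
    rwa [(C.degreesAgree_cleaned hp hr).isTreeNode_iff, (C.degreesAgree_cleaned hp hr).isLeaf_iff]
  obtain ⟨ch, hch, hchT⟩ :=
    C.treeChild.2 v hvN fun h => hleaf ((C.degreesAgree_cleaned hvp hvr).isLeaf_iff.mpr h)
  by_cases hchp : ch = p
  · have hv : v = C.pp :=
      eq_of_edge_of_indeg_eq_one C.isTreeNode_p.2.1 (hchp ▸ hch) C.edge_pp_p
    exact ⟨C.pc, hv ▸ C.edge_cleaned_pp_pc,
      htype _ C.pc_ne_p C.pc_ne_r C.pc_isTreeNode_or_isLeaf⟩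
  · have hchr : ch ≠ r := C.isRetic_r.ne_of_isTreeNode_or_isLeaf hchT
    exact ⟨ch, C.edge_cleaned_of_edge hch hvp hchp hvr hchr, htype ch hchp hchr hchT⟩

end ReticEdgeNbhd

end Net

/-- Every maximum subnetwork of a binary tree-child network is tree-child. -/
theorem maxSubnet_treeChild {X : Type} (N M : Net X) (hN : N.TreeChild)
    (h : N.IsMaxSubnet M) : M.TreeChild := by
  obtain ⟨⟨p, r⟩, he, hclean⟩ := h
  obtain ⟨C⟩ := Net.ReticEdgeNbhd.nonempty hN he
  rw [C.eq_cleaned_of_cleansTo hclean]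
  exact C.treeChild_cleaned
end
end
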